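/- arXiv:2410.11069 — 7 statements merged into one kernel-verified Lean document; each statement's English description precedes it below -/
import Mathlib

section
/- The alternating group A_16 is not uniformly semi-rational: for every integer r there exist x ∈ A_16 and a generator y of the cyclic subgroup generated by x such that y is conjugate in A_16 neither to x nor to x^r. -/
set_option maxRecDepth 100000
set_option maxHeartbeats 1000000

open Equiv Equiv.Perm

def mk (f g : Fin 16 → Fin 16) : Equiv.Perm (Fin 16) :=
  if h : (∀ x, g (f x) = x) ∧ (∀ x, f (g x) = x) then ⟨f, g, h.1, h.2⟩ else 1

-- 15-cycle (0 .. 14), fixes 15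
def p1 : Equiv.Perm (Fin 16) :=
  mk ![1,2,3,4,5,6,7,8,9,10,11,12,13,14,0,15] ![14,0,1,2,3,4,5,6,7,8,9,10,11,12,13,15]
-- 9-cycle (0..8) * 7-cycle (9..15)
def p2 : Equiv.Perm (Fin 16) :=
  mk ![1,2,3,4,5,6,7,8,0,10,11,12,13,14,15,9] ![8,0,1,2,3,4,5,6,7,15,9,10,11,12,13,14]
-- 7-cycle (0..6) * 5-cycle (7..11) * 3-cycle (12..14), fixes 15
def p3 : Equiv.Perm (Fin 16) :=
  mk ![1,2,3,4,5,6,0,8,9,10,11,7,13,14,12,15] ![6,0,1,2,3,4,5,11,7,8,9,10,14,12,13,15]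

def cf1 (s : ℕ) : Fin 16 → Fin 16 := fun i =>
  if i.1 < 15 then ⟨s * i.1 % 15, by omega⟩ else i
def c1 (s : ℕ) : Equiv.Perm (Fin 16) := mk (cf1 s) (cf1 (s ^ 7 % 15))

def cf2 (s : ℕ) : Fin 16 → Fin 16 := fun i =>
  if i.1 < 9 then ⟨s * i.1 % 9, by omega⟩ else ⟨9 + s * (i.1 - 9) % 7, by omega⟩
def c2 (s : ℕ) : Equiv.Perm (Fin 16) := mk (cf2 s) (cf2 (s ^ 5 % 63))

def cf3 (s : ℕ) : Fin 16 → Fin 16 := fun i =>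
  if i.1 < 7 then ⟨s * i.1 % 7, by omega⟩
  else if i.1 < 12 then ⟨7 + s * (i.1 - 7) % 5, by omega⟩
  else if i.1 < 15 then ⟨12 + s * (i.1 - 12) % 3, by omega⟩ else i
def c3 (s : ℕ) : Equiv.Perm (Fin 16) := mk (cf3 s) (cf3 (s ^ 11 % 105))

def Q1 (s : ℕ) : Prop :=
  Equiv.Perm.sign (c1 s) = 1 ∧ c1 s * p1 * (c1 s)⁻¹ = p1 ^ (s % 15)
def Q2 (s : ℕ) : Prop :=
  Equiv.Perm.sign (c2 s) = 1 ∧ c2 s * p2 * (c2 s)⁻¹ = p2 ^ (s % 63)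
def Q3 (s : ℕ) : Prop :=
  Equiv.Perm.sign (c3 s) = 1 ∧ c3 s * p3 * (c3 s)⁻¹ = p3 ^ (s % 105)

def P (s : ℕ) : Prop := s % 3 = 0 ∨ s % 5 = 0 ∨ s % 7 = 0 ∨ Q1 s ∨ Q2 s ∨ Q3 s

instance (s : ℕ) : Decidable (P s) := by unfold P Q1 Q2 Q3; infer_instance

/-- the key orbit lemma -/
lemma orbit_step (z a : Equiv.Perm (Fin 16)) (p : Fin 16) (S : Fin 16 → Prop)
    (hz : ∀ i, S i → S (z i)) (hza : Commute z a)
    (horb : ∀ i, S i → ∃ k : Fin 16, (a ^ k.1) p = i) (hp : S p) :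
    ∃ t : ℕ, ∀ i, S i → z i = (a ^ t) i := by
  obtain ⟨t, ht⟩ := horb _ (hz p hp)
  have hcom : ∀ m : ℕ, ∀ j, z ((a ^ m) j) = (a ^ m) (z j) := by
    intro m j
    have h := (hza.pow_right m).eq
    calc z ((a ^ m) j) = (z * a ^ m) j := rfl
    _ = (a ^ m * z) j := by rw [h]
    _ = (a ^ m) (z j) := rfl
  refine ⟨t.1, fun i hi => ?_⟩
  obtain ⟨k, hk⟩ := horb i hi
  subst hk
  calc z ((a ^ k.1) p) = (a ^ k.1) (z p) := hcom _ _
  _ = (a ^ k.1) ((a ^ t.1) p) := by rw [ht]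
  _ = (a ^ (k.1 + t.1)) p := by rw [pow_add]; rfl
  _ = (a ^ t.1) ((a ^ k.1) p) := by rw [add_comm, pow_add]; rfl

lemma moved_inv (z a : Equiv.Perm (Fin 16)) (h : Commute z a) :
    ∀ i, a i ≠ i → a (z i) ≠ z i := by
  intro i hi hc
  have h1 : a (z i) = z (a i) := by
    calc a (z i) = (a * z) i := rfl
    _ = (z * a) i := by rw [h.eq]
    _ = z (a i) := rfl
  exact hi (z.injective (h1 ▸ hc))

lemma fixed_inv (z a : Equiv.Perm (Fin 16)) (h : Commute z a) :
    ∀ i, a i = i → a (z i) = z i := by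
  intro i hi
  calc a (z i) = (a * z) i := rfl
  _ = (z * a) i := by rw [h.eq]
  _ = z (a i) := rfl
  _ = z i := by rw [hi]

/-- centralizer of p1 consists of even permutations -/
lemma hc1 : ∀ z, z * p1 = p1 * z → Equiv.Perm.sign z = 1 := by
  intro z h
  have hcz : Commute z p1 := h
  obtain ⟨t, ht⟩ := orbit_step z p1 0 (fun i => p1 i ≠ i) (moved_inv z p1 hcz) hcz
    (by decide) (by decide)
  have h15 : z 15 = 15 := by
    have h1 : p1 (z 15) = z 15 := fixed_inv z p1 hcz 15 (by decide)
    exact (by decide : ∀ j, p1 j = j → j = 15) _ h1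
  have hzp : z = p1 ^ t := by
    apply Equiv.ext
    intro i
    by_cases hi : p1 i = i
    · have hi15 : i = 15 := (by decide : ∀ j, p1 j = j → j = 15) i hi
      subst hi15
      rw [h15, Equiv.Perm.pow_apply_eq_self_of_apply_eq_self (by decide : p1 15 = 15)]
    · exact ht i hi
  rw [hzp, map_pow, (by decide : Equiv.Perm.sign p1 = 1), one_pow]

/-- centralizer of p2 consists of even permutations -/
lemma hc2 : ∀ z, z * p2 = p2 * z → Equiv.Perm.sign z = 1 := by
  intro z h
  have hcz : Commute z p2 := h
  obtain ⟨t, ht⟩ := orbit_step z (p2 ^ 28) 0 (fun i => (p2 ^ 9) i = i)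
    (fixed_inv z (p2 ^ 9) (hcz.pow_right 9)) (hcz.pow_right 28) (by decide) (by decide)
  obtain ⟨u, hu⟩ := orbit_step z (p2 ^ 36) 9 (fun i => (p2 ^ 7) i = i)
    (fixed_inv z (p2 ^ 7) (hcz.pow_right 7)) (hcz.pow_right 36) (by decide) (by decide)
  have hzp : z = p2 ^ (28 * t + 36 * u) := by
    apply Equiv.ext
    intro i
    rcases (by decide : ∀ j, (p2 ^ 9) j = j ∨ (p2 ^ 7) j = j) i with hi | hi
    · have h36 : (p2 ^ (36 * u)) i = i := by
        rw [pow_mul]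
        exact Equiv.Perm.pow_apply_eq_self_of_apply_eq_self
          ((by decide : ∀ j, (p2 ^ 9) j = j → (p2 ^ 36) j = j) i hi) u
      rw [pow_add, Equiv.Perm.mul_apply, h36, pow_mul]
      exact ht i hi
    · have h28 : (p2 ^ (28 * t)) i = i := by
        rw [pow_mul]
        exact Equiv.Perm.pow_apply_eq_self_of_apply_eq_self
          ((by decide : ∀ j, (p2 ^ 7) j = j → (p2 ^ 28) j = j) i hi) t
      rw [add_comm, pow_add, Equiv.Perm.mul_apply, h28, pow_mul]
      exact hu i hi
  rw [hzp, map_pow, (by decide : Equiv.Perm.sign p2 = 1), one_pow]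

/-- centralizer of p3 consists of even permutations -/
lemma hc3 : ∀ z, z * p3 = p3 * z → Equiv.Perm.sign z = 1 := by
  intro z h
  have hcz : Commute z p3 := h
  obtain ⟨t, ht⟩ := orbit_step z (p3 ^ 15) 0 (fun i => (p3 ^ 15) i ≠ i)
    (moved_inv z (p3 ^ 15) (hcz.pow_right 15)) (hcz.pow_right 15) (by decide) (by decide)
  obtain ⟨u, hu⟩ := orbit_step z (p3 ^ 21) 7 (fun i => (p3 ^ 21) i ≠ i)
    (moved_inv z (p3 ^ 21) (hcz.pow_right 21)) (hcz.pow_right 21) (by decide) (by decide)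
  obtain ⟨v, hv⟩ := orbit_step z (p3 ^ 70) 12 (fun i => (p3 ^ 70) i ≠ i)
    (moved_inv z (p3 ^ 70) (hcz.pow_right 70)) (hcz.pow_right 70) (by decide) (by decide)
  have hfix : ∀ (w : Equiv.Perm (Fin 16)) (n m : ℕ) (i : Fin 16), (w ^ n) i = i →
      ((w ^ n) ^ m) i = i := fun w n m i hi =>
    Equiv.Perm.pow_apply_eq_self_of_apply_eq_self hi m
  have hzp : z = (p3 ^ 15) ^ t * ((p3 ^ 21) ^ u * (p3 ^ 70) ^ v) := by
    apply Equiv.ext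
    intro i
    rcases (by decide : ∀ j, ((p3 ^ 15) j ≠ j ∧ (p3 ^ 21) j = j ∧ (p3 ^ 70) j = j)
        ∨ ((p3 ^ 21) j ≠ j ∧ (p3 ^ 15) j = j ∧ (p3 ^ 70) j = j)
        ∨ ((p3 ^ 70) j ≠ j ∧ (p3 ^ 15) j = j ∧ (p3 ^ 21) j = j)
        ∨ (p3 j = j ∧ (p3 ^ 15) j = j ∧ (p3 ^ 21) j = j ∧ (p3 ^ 70) j = j)) i with
      ⟨hi, h1, h2⟩ | ⟨hi, h1, h2⟩ | ⟨hi, h1, h2⟩ | ⟨hi, h1, h2, h3⟩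
    · rw [Equiv.Perm.mul_apply, Equiv.Perm.mul_apply, hfix _ _ _ _ h2, hfix _ _ _ _ h1]
      exact ht i hi
    · rw [Equiv.Perm.mul_apply, Equiv.Perm.mul_apply, hfix _ _ _ _ h2, ← hu i hi]
      exact (hfix p3 15 t (z i) (fixed_inv z (p3 ^ 15) (hcz.pow_right 15) i h1)).symm
    · rw [Equiv.Perm.mul_apply, Equiv.Perm.mul_apply, ← hv i hi,
        hfix p3 21 u (z i) (fixed_inv z (p3 ^ 21) (hcz.pow_right 21) i h2)]
      exact (hfix p3 15 t (z i) (fixed_inv z (p3 ^ 15) (hcz.pow_right 15) i h1)).symm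
    · rw [Equiv.Perm.mul_apply, Equiv.Perm.mul_apply, hfix _ _ _ _ h3, hfix _ _ _ _ h2,
        hfix _ _ _ _ h1]
      have h15 := (by decide : ∀ j, p3 j = j → j = 15)
      have hz15 : z i = 15 := h15 _ (fixed_inv z p3 hcz i hi)
      rw [hz15, h15 i hi]
  rw [hzp, map_mul, map_mul, map_pow, map_pow, map_pow, map_pow, map_pow, map_pow]
  rw [(by decide : Equiv.Perm.sign p3 = 1)]
  simp

abbrev A16 := alternatingGroup (Fin 16)

lemma notConjA (Y W : ↥A16) (x d e : Equiv.Perm (Fin 16))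
    (hcent : ∀ z, z * x = x * z → Equiv.Perm.sign z = 1)
    (hd : d * x * d⁻¹ = (Y : Equiv.Perm (Fin 16)))
    (hds : Equiv.Perm.sign d = -1)
    (he : e * x * e⁻¹ = (W : Equiv.Perm (Fin 16)))
    (hes : Equiv.Perm.sign e = 1) : ¬ IsConj Y W := by
  rintro ⟨c0, hc⟩
  set c : ↥A16 := (c0 : ↥A16) with hcdef
  have hc' : (c : Equiv.Perm (Fin 16)) * Y * (c : Equiv.Perm (Fin 16))⁻¹ = W := by
    have h1 : ((c : Equiv.Perm (Fin 16)) * Y : Equiv.Perm (Fin 16)) = W * c := by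
      exact_mod_cast congrArg Subtype.val hc.eq
    rw [h1, mul_inv_cancel_right]
  set u := e⁻¹ * ((c : Equiv.Perm (Fin 16)) * d) with hu
  have h2 : ((c : Equiv.Perm (Fin 16)) * d) * x * ((c : Equiv.Perm (Fin 16)) * d)⁻¹ = W := by
    calc ((c : Equiv.Perm (Fin 16)) * d) * x * ((c : Equiv.Perm (Fin 16)) * d)⁻¹
        = (c : Equiv.Perm (Fin 16)) * (d * x * d⁻¹) * (c : Equiv.Perm (Fin 16))⁻¹ := by
          rw [mul_inv_rev]; group
    _ = (c : Equiv.Perm (Fin 16)) * Y * (c : Equiv.Perm (Fin 16))⁻¹ := by rw [hd]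
    _ = W := hc'
  have hux : u * x * u⁻¹ = x := by
    calc u * x * u⁻¹
        = e⁻¹ * (((c : Equiv.Perm (Fin 16)) * d) * x * ((c : Equiv.Perm (Fin 16)) * d)⁻¹) * e := by
          rw [hu, mul_inv_rev]; group
    _ = e⁻¹ * (W : Equiv.Perm (Fin 16)) * e := by rw [h2]
    _ = e⁻¹ * (e * x * e⁻¹) * e := by rw [he]
    _ = x := by group
  have hcomm : u * x = x * u := by
    conv_rhs => rw [← hux]
    group
  have hsu := hcent u hcomm
  have hcs : Equiv.Perm.sign (c : Equiv.Perm (Fin 16)) = 1 :=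
    Equiv.Perm.mem_alternatingGroup.mp c.2
  rw [hu, map_mul, map_mul, map_inv, hes, hds, hcs] at hsu
  norm_num at hsu

lemma zpowers_pow_eq (X : ↥A16) (k l : ℕ) (h : X ^ (k * l) = X) :
    Subgroup.zpowers (X ^ k) = Subgroup.zpowers X := by
  refine le_antisymm (Subgroup.zpowers_le.mpr (Subgroup.npow_mem_zpowers X k))
    (Subgroup.zpowers_le.mpr ?_)
  have h2 : (X ^ k) ^ l = X := by rw [← pow_mul]; exact h
  exact Subgroup.mem_zpowers_iff.mpr ⟨(l : ℤ), by rw [zpow_natCast]; exact h2⟩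

lemma pow_r (X : ↥A16) (m : ℕ) (hm : 0 < m) (h : X ^ m = 1) (r : ℤ) :
    X ^ r = X ^ ((r % m).toNat) := by
  have h' : X ^ (m : ℤ) = 1 := by rw [zpow_natCast, h]
  have hr : r = (m : ℤ) * (r / m) + r % m := (Int.mul_ediv_add_emod r m).symm
  calc X ^ r = X ^ ((m : ℤ) * (r / (m : ℤ)) + r % m) := by rw [← hr]
  _ = X ^ ((m : ℤ) * (r / (m : ℤ))) * X ^ (r % (m : ℤ)) := by rw [zpow_add]
  _ = (X ^ (m : ℤ)) ^ (r / (m : ℤ)) * X ^ (r % (m : ℤ)) := by rw [zpow_mul]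
  _ = X ^ (r % (m : ℤ)) := by rw [h', one_zpow, one_mul]
  _ = X ^ ((r % m).toNat) := by
      rw [← zpow_natCast, Int.toNat_of_nonneg (Int.emod_nonneg r (by positivity))]

lemma coe_pow_X (X : ↥A16) (n : ℕ) :
    ((X ^ n : ↥A16) : Equiv.Perm (Fin 16)) = (X : Equiv.Perm (Fin 16)) ^ n :=
  SubgroupClass.coe_pow X n

set_option maxHeartbeats 4000000 in
theorem master : ∀ s : Fin 315, P s.1 := by decide

def X1 : ↥A16 := ⟨p1, Equiv.Perm.mem_alternatingGroup.mpr (by decide)⟩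
def X2 : ↥A16 := ⟨p2, Equiv.Perm.mem_alternatingGroup.mpr (by decide)⟩
def X3 : ↥A16 := ⟨p3, Equiv.Perm.mem_alternatingGroup.mpr (by decide)⟩

/-- A group `G` is `r`-semi-rational if every generator of the cyclic subgroup
generated by any `x ∈ G` is conjugate in `G` to `x` or to `x ^ r`. -/
def IsSemiRational (G : Type*) [Group G] (r : ℤ) : Prop :=
  ∀ x y : G, Subgroup.zpowers y = Subgroup.zpowers x → IsConj y x ∨ IsConj y (x ^ r)

theorem alternatingGroup_sixteen_not_uniformlySemiRational :
    ∀ r : ℤ, ∃ x y : alternatingGroup (Fin 16),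
      Subgroup.zpowers y = Subgroup.zpowers x ∧ ¬ IsConj y x ∧ ¬ IsConj y (x ^ r) := by
  intro r
  have hs0 : 0 ≤ r % 315 := Int.emod_nonneg r (by norm_num)
  have hslt' : r % 315 < 315 := Int.emod_lt_of_pos r (by norm_num)
  set s : ℕ := (r % 315).toNat with hsdef
  have hseq : (s : ℤ) = r % 315 := Int.toNat_of_nonneg hs0
  have hslt : s < 315 := by omega
  have hP : P s := master ⟨s, hslt⟩
  unfold P Q1 Q2 Q3 at hP
  have e15 : (r % 15).toNat = s % 15 := by
    have h1 : r % 15 = (r % 315) % 15 := (Int.emod_emod_of_dvd r (by norm_num)).symm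
    omega
  have e63 : (r % 63).toNat = s % 63 := by
    have h1 : r % 63 = (r % 315) % 63 := (Int.emod_emod_of_dvd r (by norm_num)).symm
    omega
  have e105 : (r % 105).toNat = s % 105 := by
    have h1 : r % 105 = (r % 315) % 105 := (Int.emod_emod_of_dvd r (by norm_num)).symm
    omega
  have hz3 : Subgroup.zpowers (X3 ^ 11) = Subgroup.zpowers X3 :=
    zpowers_pow_eq X3 11 86 (Subtype.ext (by
      rw [coe_pow_X]
      show p3 ^ (11 * 86) = p3
      rw [show 11 * 86 = 105 * 9 + 1 from rfl, pow_add, pow_mul,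
        (by decide : p3 ^ 105 = 1), one_pow, one_mul, pow_one]))
  have hnc3 : ¬ IsConj (X3 ^ 11) X3 :=
    notConjA (X3 ^ 11) X3 p3 (c3 11) 1 hc3 (by rw [coe_pow_X]; decide) (by decide)
      (by rw [one_mul, inv_one, mul_one]; rfl) (by simp)
  have hX3o : X3 ^ (105 : ℤ) = 1 := by
    rw [show (105 : ℤ) = ((105 : ℕ) : ℤ) by norm_num, zpow_natCast]
    exact Subtype.ext (by rw [coe_pow_X, OneMemClass.coe_one]; decide)
  -- reusable small-order branch
  have small : ∀ d n : ℕ, 0 < d → (d : ℤ) * n = 105 → r % d = 0 →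
      ¬ ((p3 ^ 11) ^ n = 1) → ∃ x y : ↥A16,
      Subgroup.zpowers y = Subgroup.zpowers x ∧ ¬ IsConj y x ∧ ¬ IsConj y (x ^ r) := by
    intro d n hd hdn hr hnp
    refine ⟨X3, X3 ^ 11, hz3, hnc3, ?_⟩
    rintro ⟨c, hc⟩
    obtain ⟨q, hq⟩ := Int.dvd_of_emod_eq_zero hr
    have h35 : (X3 ^ r) ^ (n : ℕ) = 1 := by
      rw [← zpow_natCast (X3 ^ r), ← zpow_mul, hq]
      rw [show (d : ℤ) * q * (n : ℤ) = 105 * q by rw [mul_comm ((d:ℤ)) q, mul_assoc, hdn]; ring,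
        zpow_mul, hX3o, one_zpow]
    have hsc := hc.pow_right n
    rw [h35] at hsc
    have h1 : (X3 ^ 11) ^ (n : ℕ) = 1 := by
      have h2 := hsc.eq
      rw [one_mul] at h2
      exact mul_left_cancel (a := (c : ↥A16)) (by rw [h2, mul_one])
    have h3 : (p3 ^ 11) ^ n = 1 := by
      have h2 := congrArg Subtype.val h1
      rwa [coe_pow_X, coe_pow_X, OneMemClass.coe_one] at h2
    exact hnp h3
  rcases hP with h | h | h | h | h | h
  · exact small 3 35 (by norm_num) (by norm_num) (by
      have h1 : r % 3 = (r % 315) % 3 := (Int.emod_emod_of_dvd r (by norm_num)).symm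
      omega) (by decide)
  · exact small 5 21 (by norm_num) (by norm_num) (by
      have h1 : r % 5 = (r % 315) % 5 := (Int.emod_emod_of_dvd r (by norm_num)).symm
      omega) (by decide)
  · exact small 7 15 (by norm_num) (by norm_num) (by
      have h1 : r % 7 = (r % 315) % 7 := (Int.emod_emod_of_dvd r (by norm_num)).symm
      omega) (by decide)
  · refine ⟨X1, X1 ^ 7, zpowers_pow_eq X1 7 13 (Subtype.ext (by rw [coe_pow_X]; decide)),
      notConjA (X1 ^ 7) X1 p1 (c1 7) 1 hc1 (by rw [coe_pow_X]; decide) (by decide)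
        (by rw [one_mul, inv_one, mul_one]; rfl) (by simp), ?_⟩
    have hXo : X1 ^ (15 : ℕ) = 1 :=
      Subtype.ext (by rw [coe_pow_X, OneMemClass.coe_one]; decide)
    rw [pow_r X1 15 (by norm_num) hXo r, show ((15:ℕ):ℤ) = (15:ℤ) from by norm_num, e15]
    exact notConjA (X1 ^ 7) (X1 ^ (s % 15)) p1 (c1 7) (c1 s) hc1
      (by rw [coe_pow_X]; decide) (by decide) (by rw [coe_pow_X]; exact h.2) h.1
  · refine ⟨X2, X2 ^ 5, zpowers_pow_eq X2 5 38 (Subtype.ext (by rw [coe_pow_X]; decide)),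
      notConjA (X2 ^ 5) X2 p2 (c2 5) 1 hc2 (by rw [coe_pow_X]; decide) (by decide)
        (by rw [one_mul, inv_one, mul_one]; rfl) (by simp), ?_⟩
    have hXo : X2 ^ (63 : ℕ) = 1 :=
      Subtype.ext (by rw [coe_pow_X, OneMemClass.coe_one]; decide)
    rw [pow_r X2 63 (by norm_num) hXo r, show ((63:ℕ):ℤ) = (63:ℤ) from by norm_num, e63]
    exact notConjA (X2 ^ 5) (X2 ^ (s % 63)) p2 (c2 5) (c2 s) hc2
      (by rw [coe_pow_X]; decide) (by decide) (by rw [coe_pow_X]; exact h.2) h.1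
  · refine ⟨X3, X3 ^ 11, hz3, hnc3, ?_⟩
    have hXo : X3 ^ (105 : ℕ) = 1 :=
      Subtype.ext (by rw [coe_pow_X, OneMemClass.coe_one]; decide)
    rw [pow_r X3 105 (by norm_num) hXo r, show ((105:ℕ):ℤ) = (105:ℤ) from by norm_num, e105]
    exact notConjA (X3 ^ 11) (X3 ^ (s % 105)) p3 (c3 11) (c3 s) hc3
      (by rw [coe_pow_X]; decide) (by decide) (by rw [coe_pow_X]; exact h.2) h.1
end

section
/- The alternating group A_21 is not uniformly semi-rational: for every integer r there exist x ∈ A_21 and a generator y of the cyclic subgroup generated by x such that y is conjugate in A_21 neither to x nor to x^r. -/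
open Equiv Equiv.Perm Subgroup

section Conjugacy

variable {G : Type*} [Group G]

theorem IsConj.zpow {a b : G} (n : ℤ) (h : IsConj a b) : IsConj (a ^ n) (b ^ n) := by
  obtain ⟨c, rfl⟩ := isConj_iff.mp h
  exact isConj_iff.mpr ⟨c, conj_zpow.symm⟩

theorem IsConj.orderOf_eq {a b : G} (h : IsConj a b) : orderOf a = orderOf b := by
  obtain ⟨c, hc⟩ := h
  exact SemiconjBy.orderOf_eq (c : G) hc

theorem zpowers_pow_eq_of_coprime {x : G} {k : ℕ} (hk : (orderOf x).Coprime k) :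
    zpowers (x ^ k) = zpowers x :=
  le_antisymm (zpowers_le.mpr (pow_mem (mem_zpowers x) k))
    (zpowers_le.mpr (mem_zpowers_pow_iff.mpr hk.symm))

theorem orderOf_zpow_ne_of_dvd {x : G} {n d : ℕ} (hx : orderOf x = n) (hn : 0 < n) (hd : 1 < d)
    (hdn : d ∣ n) {r : ℤ} (hdr : (d : ℤ) ∣ r) : orderOf (x ^ r) ≠ orderOf x := by
  subst hx
  obtain ⟨m, hm⟩ := hdn
  obtain ⟨s, rfl⟩ := hdr
  have hm0 : 0 < m := Nat.pos_of_mul_pos_left (hm ▸ hn)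
  have hpow : (x ^ ((d : ℤ) * s)) ^ m = 1 := by
    rw [← zpow_natCast, ← zpow_mul,
      show (d : ℤ) * s * m = (orderOf x : ℤ) * s by rw [hm]; push_cast; ring,
      zpow_mul, zpow_natCast, pow_orderOf_eq_one, one_zpow]
  have hle : orderOf (x ^ ((d : ℤ) * s)) ≤ m := orderOf_le_of_pow_eq_one hm0 hpow
  have hlt : m < orderOf x := by rw [hm]; exact lt_mul_left hm0 hd
  omega

theorem Subgroup.not_isConj_of_centralizer_le {H : Subgroup G} {x y : H}
    (hx : centralizer {(x : G)} ≤ H) {t : G} (ht : t ∉ H) (hxy : t * x * t⁻¹ = y) :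
    ¬ IsConj x y := by
  intro hconj
  obtain ⟨⟨c, hcH⟩, hc⟩ := isConj_iff.mp hconj
  have hc' : c * x * c⁻¹ = y := by simpa only [coe_mul, coe_inv] using congrArg Subtype.val hc
  have hcomm : t⁻¹ * c ∈ centralizer {(x : G)} := by
    rw [mem_centralizer_singleton_iff]
    calc t⁻¹ * c * x = t⁻¹ * (c * x * c⁻¹) * c := by group
      _ = x * (t⁻¹ * c) := by rw [hc', ← hxy]; group
  exact ht (by simpa using H.mul_mem hcH (H.inv_mem (hx hcomm)))

def selfConjExponents (x : G) : Submonoid ℤ where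
  carrier := {e | IsConj (x ^ e) x}
  mul_mem' {a b} ha hb := by
    simp only [Set.mem_ofPred_eq, zpow_mul] at ha hb ⊢
    exact (ha.zpow b).trans hb
  one_mem' := by simpa using IsConj.refl x

theorem mem_selfConjExponents {x : G} {e : ℤ} : e ∈ selfConjExponents x ↔ IsConj (x ^ e) x :=
  Iff.rfl

theorem mem_selfConjExponents_of_modEq {x : G} {a b : ℤ} (hab : a ≡ b [ZMOD orderOf x])
    (hb : b ∈ selfConjExponents x) : a ∈ selfConjExponents x := by
  rwa [mem_selfConjExponents, zpow_eq_zpow_iff_modEq.mpr hab]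

theorem exists_generator_not_isConj {x : G} {k : ℕ} (hk : (orderOf x).Coprime k)
    (hxk : ¬ IsConj (x ^ k) x) {r : ℤ} (hr : IsConj (x ^ r) x ∨ orderOf (x ^ r) ≠ orderOf x) :
    ∃ y : G, zpowers y = zpowers x ∧ ¬ IsConj y x ∧ ¬ IsConj y (x ^ r) := by
  refine ⟨x ^ k, zpowers_pow_eq_of_coprime hk, hxk, fun hconj => ?_⟩
  rcases hr with hr | hr
  · exact hxk (hconj.trans hr)
  · exact hr (hconj.orderOf_eq.symm.trans hk.orderOf_pow)

end Conjugacy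

section Alternating

variable {α : Type*} [Fintype α] [DecidableEq α]

theorem centralizer_le_alternatingGroup_of_cycleType_eq {g : Perm α} {m : Multiset ℕ}
    (hg : g.cycleType = m) (hodd : ∀ c ∈ m, Odd c) (hnodup : m.Nodup)
    (hcard : Fintype.card α ≤ m.sum + 1) : centralizer {g} ≤ alternatingGroup α := by
  subst hg
  exact centralizer_le_alternating_iff.mpr
    ⟨hodd, hcard, Multiset.nodup_iff_count_le_one.mp hnodup⟩

theorem alternatingGroup.isConj_pow_of_sign_eq_one {x : alternatingGroup α} {s : Perm α}
    (hs : sign s = 1) {k : ℕ} (hsx : s * x * s⁻¹ = (x : Perm α) ^ k) : IsConj (x ^ k) x :=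
  (isConj_iff.mpr ⟨⟨s, mem_alternatingGroup.mpr hs⟩, Subtype.ext (by simpa using hsx)⟩).symm

theorem alternatingGroup.not_isConj_pow_of_sign_eq_neg_one {x : alternatingGroup α}
    (hx : centralizer {(x : Perm α)} ≤ alternatingGroup α) {t : Perm α} (ht : sign t = -1)
    {k : ℕ} (htx : t * x * t⁻¹ = (x : Perm α) ^ k) : ¬ IsConj (x ^ k) x := by
  rw [isConj_comm]
  refine not_isConj_of_centralizer_le hx (fun h => ?_) (by simpa using htx)
  rw [mem_alternatingGroup, ht] at h
  exact absurd h (by decide)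

end Alternating

section Cycles

variable {α : Type*} [DecidableEq α]

def ofCycles (L : List (List α)) : Perm α := (L.map List.formPerm).prod

variable [Fintype α] {L : List (List α)}

theorem cycleType_ofCycles (hnodup : L.flatten.Nodup) (hlen : ∀ l ∈ L, 2 ≤ l.length) :
    (ofCycles L).cycleType = L.map List.length := by
  obtain ⟨hnodup, hdisj⟩ := List.nodup_flatten.mp hnodup
  rw [ofCycles, cycleType_eq _ rfl]
  · rw [List.map_map]
    congr 1
    refine List.map_congr_left fun l hl => ?_
    dsimp only [Function.comp_apply]
    rw [List.support_formPerm_of_nodup l (hnodup l hl), List.toFinset_card_of_nodup (hnodup l hl)]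
    rintro x rfl
    simpa using hlen _ hl
  · simpa using fun l hl => List.isCycle_formPerm (hnodup l hl) (hlen l hl)
  · rw [List.pairwise_map]
    refine hdisj.imp_of_mem fun ha hb hab => ?_
    exact (List.formPerm_disjoint_iff (hnodup _ ha) (hnodup _ hb) (hlen _ ha) (hlen _ hb)).mpr hab

theorem sign_ofCycles (hnodup : L.flatten.Nodup) (hlen : ∀ l ∈ L, 2 ≤ l.length) :
    sign (ofCycles L) = (-1) ^ ((L.map List.length).sum + L.length) := by
  rw [sign_of_cycleType, cycleType_ofCycles hnodup hlen, Multiset.sum_coe, Multiset.coe_card,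
    List.length_map]

end Cycles

set_option maxRecDepth 8000

def g21 : alternatingGroup (Fin 21) :=
  ⟨ofCycles [[0, 1, 2, 3, 4, 5, 6, 7, 8, 9, 10, 11, 12, 13, 14, 15, 16, 17, 18, 19, 20]],
    mem_alternatingGroup.mpr (by rw [sign_ofCycles (by decide) (by decide)]; decide)⟩

def g99 : alternatingGroup (Fin 21) :=
  ⟨ofCycles [[0, 1, 2, 3, 4, 5, 6, 7, 8], [9, 10, 11, 12, 13, 14, 15, 16, 17, 18, 19]],
    mem_alternatingGroup.mpr (by rw [sign_ofCycles (by decide) (by decide)]; decide)⟩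

def g231 : alternatingGroup (Fin 21) :=
  ⟨ofCycles [[0, 1, 2], [3, 4, 5, 6, 7, 8, 9], [10, 11, 12, 13, 14, 15, 16, 17, 18, 19, 20]],
    mem_alternatingGroup.mpr (by rw [sign_ofCycles (by decide) (by decide)]; decide)⟩

theorem cycleType_g21 : (g21 : Perm (Fin 21)).cycleType = {21} :=
  cycleType_ofCycles (by decide) (by decide)

theorem cycleType_g99 : (g99 : Perm (Fin 21)).cycleType = {9, 11} :=
  cycleType_ofCycles (by decide) (by decide)

theorem cycleType_g231 : (g231 : Perm (Fin 21)).cycleType = {3, 7, 11} :=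
  cycleType_ofCycles (by decide) (by decide)

theorem orderOf_g21 : orderOf g21 = 21 := by
  rw [← orderOf_coe, ← lcm_cycleType, cycleType_g21]; rfl

theorem orderOf_g99 : orderOf g99 = 99 := by
  rw [← orderOf_coe, ← lcm_cycleType, cycleType_g99]; rfl

theorem orderOf_g231 : orderOf g231 = 231 := by
  rw [← orderOf_coe, ← lcm_cycleType, cycleType_g231]; rfl

theorem not_isConj_g21_sq : ¬ IsConj (g21 ^ 2) g21 :=
  alternatingGroup.not_isConj_pow_of_sign_eq_neg_one
    (centralizer_le_alternatingGroup_of_cycleType_eq cycleType_g21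
      (by decide) (by decide) (by simp))
    (t := ofCycles
      [[1, 2, 4, 8, 16, 11], [3, 6, 12], [5, 10, 20, 19, 17, 13], [7, 14], [9, 18, 15]])
    (by rw [sign_ofCycles (by decide) (by decide)]; decide) (by decide)

theorem not_isConj_g99_sq : ¬ IsConj (g99 ^ 2) g99 :=
  alternatingGroup.not_isConj_pow_of_sign_eq_neg_one
    (centralizer_le_alternatingGroup_of_cycleType_eq cycleType_g99
      (by decide) (by decide) (by simp))
    (t := ofCycles [[1, 2, 4, 8, 7, 5], [3, 6], [10, 11, 13, 17, 14, 19, 18, 16, 12, 15]])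
    (by rw [sign_ofCycles (by decide) (by decide)]; decide) (by decide)

theorem not_isConj_g231_pow_seventeen : ¬ IsConj (g231 ^ 17) g231 :=
  alternatingGroup.not_isConj_pow_of_sign_eq_neg_one
    (centralizer_le_alternatingGroup_of_cycleType_eq cycleType_g231
      (by decide) (by decide) (by simp))
    (t := ofCycles [[1, 2], [4, 6, 5, 9, 7, 8], [11, 16, 13, 17, 19, 20, 15, 18, 14, 12]])
    (by rw [sign_ofCycles (by decide) (by decide)]; decide) (by decide)

theorem five_mem_selfConjExponents_g21 : 5 ∈ selfConjExponents g21 :=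
  alternatingGroup.isConj_pow_of_sign_eq_one
    (s := ofCycles [[1, 5, 4, 20, 16, 17], [2, 10, 8, 19, 11, 13], [3, 15, 12, 18, 6, 9], [7, 14]])
    (by rw [sign_ofCycles (by decide) (by decide)]; decide) (by decide)

theorem five_mem_selfConjExponents_g99 : 5 ∈ selfConjExponents g99 :=
  alternatingGroup.isConj_pow_of_sign_eq_one
    (s := ofCycles [[1, 5, 7, 8, 4, 2], [3, 6], [10, 14, 12, 13, 18], [11, 19, 15, 17, 16]])
    (by rw [sign_ofCycles (by decide) (by decide)]; decide) (by decide)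

theorem two_mem_selfConjExponents_g231 : 2 ∈ selfConjExponents g231 :=
  alternatingGroup.isConj_pow_of_sign_eq_one
    (s := ofCycles [[1, 2], [4, 5, 7], [6, 9, 8], [11, 12, 14, 18, 15, 20, 19, 17, 13, 16]])
    (by rw [sign_ofCycles (by decide) (by decide)]; decide) (by decide)

theorem five_mem_selfConjExponents_g231 : 5 ∈ selfConjExponents g231 :=
  alternatingGroup.isConj_pow_of_sign_eq_one
    (s := ofCycles [[1, 2], [4, 8, 7, 9, 5, 6], [11, 15, 13, 14, 19], [12, 20, 16, 18, 17]])
    (by rw [sign_ofCycles (by decide) (by decide)]; decide) (by decide)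

set_option synthInstance.maxSize 512 in
theorem exists_pow_modEq_of_not_dvd {r : ℤ} (h3 : ¬ 3 ∣ r) (h7 : ¬ 7 ∣ r) (h11 : ¬ 11 ∣ r) :
    (∃ j : ℕ, r ≡ 5 ^ j [ZMOD 21]) ∨ (∃ j : ℕ, r ≡ 5 ^ j [ZMOD 99]) ∨
      ∃ i j : ℕ, r ≡ 2 ^ i * 5 ^ j [ZMOD 231] := by
  -- `5`, `5` and `2, 5` generate the subgroups of index 2 of `(ℤ/21)ˣ`, `(ℤ/99)ˣ`, `(ℤ/231)ˣ`
  -- on which the three Jacobi symbols of the proof idea are `1`.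
  have key : ∀ m < 693, ¬ 3 ∣ m → ¬ 7 ∣ m → ¬ 11 ∣ m →
      (∃ j < 6, m % 21 = 5 ^ j % 21) ∨ (∃ j < 30, m % 99 = 5 ^ j % 99) ∨
        ∃ i < 30, ∃ j < 2, m % 231 = 2 ^ i * 5 ^ j % 231 := by
    decide
  obtain ⟨m, hm⟩ : ∃ m : ℕ, (m : ℤ) = r % 693 :=
    ⟨_, Int.toNat_of_nonneg (Int.emod_nonneg r (by norm_num))⟩
  rcases key m (by omega) (by omega) (by omega) (by omega) with
    ⟨j, -, hj⟩ | ⟨j, -, hj⟩ | ⟨i, -, j, -, hij⟩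
  · refine .inl ⟨j, ?_⟩
    rw [Int.ModEq, show (5 : ℤ) ^ j = ((5 ^ j : ℕ) : ℤ) by push_cast; rfl]
    omega
  · refine .inr (.inl ⟨j, ?_⟩)
    rw [Int.ModEq, show (5 : ℤ) ^ j = ((5 ^ j : ℕ) : ℤ) by push_cast; rfl]
    omega
  · refine .inr (.inr ⟨i, j, ?_⟩)
    rw [Int.ModEq, show (2 : ℤ) ^ i * 5 ^ j = ((2 ^ i * 5 ^ j : ℕ) : ℤ) by push_cast; rfl]
    omega

theorem isConj_zpow_g21_or_g99_or_g231 {r : ℤ} (h3 : ¬ 3 ∣ r) (h7 : ¬ 7 ∣ r) (h11 : ¬ 11 ∣ r) :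
    IsConj (g21 ^ r) g21 ∨ IsConj (g99 ^ r) g99 ∨ IsConj (g231 ^ r) g231 := by
  rcases exists_pow_modEq_of_not_dvd h3 h7 h11 with ⟨j, hj⟩ | ⟨j, hj⟩ | ⟨i, j, hij⟩
  · refine .inl (mem_selfConjExponents_of_modEq ?_ (pow_mem five_mem_selfConjExponents_g21 j))
    rw [orderOf_g21]; exact_mod_cast hj
  · refine .inr (.inl (mem_selfConjExponents_of_modEq ?_
      (pow_mem five_mem_selfConjExponents_g99 j)))
    rw [orderOf_g99]; exact_mod_cast hj
  · refine .inr (.inr (mem_selfConjExponents_of_modEq ?_ (mul_mem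
      (pow_mem two_mem_selfConjExponents_g231 i) (pow_mem five_mem_selfConjExponents_g231 j))))
    rw [orderOf_g231]; exact_mod_cast hij

theorem alternatingGroup_twentyone_not_uniformlySemiRational :
    ∀ r : ℤ, ∃ x y : alternatingGroup (Fin 21),
      Subgroup.zpowers y = Subgroup.zpowers x ∧ ¬ IsConj y x ∧ ¬ IsConj y (x ^ r) := by
  intro r
  have w21 := exists_generator_not_isConj (r := r) (by rw [orderOf_g21]; norm_num)
    not_isConj_g21_sq
  have w99 := exists_generator_not_isConj (r := r) (by rw [orderOf_g99]; norm_num)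
    not_isConj_g99_sq
  have w231 := exists_generator_not_isConj (r := r) (by rw [orderOf_g231]; norm_num)
    not_isConj_g231_pow_seventeen
  by_cases h3 : 3 ∣ r
  · exact ⟨g21, w21 <| .inr <|
      orderOf_zpow_ne_of_dvd orderOf_g21 (by norm_num) (by norm_num) (by norm_num) h3⟩
  by_cases h7 : 7 ∣ r
  · exact ⟨g21, w21 <| .inr <|
      orderOf_zpow_ne_of_dvd orderOf_g21 (by norm_num) (by norm_num) (by norm_num) h7⟩
  by_cases h11 : 11 ∣ r
  · exact ⟨g99, w99 <| .inr <|
      orderOf_zpow_ne_of_dvd orderOf_g99 (by norm_num) (by norm_num) (by norm_num) h11⟩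
  obtain h | h | h := isConj_zpow_g21_or_g99_or_g231 h3 h7 h11
  exacts [⟨g21, w21 (.inl h)⟩, ⟨g99, w99 (.inl h)⟩, ⟨g231, w231 (.inl h)⟩]
end

section
/- Let n ≥ 2 be a natural number and let S = {27, 28, 29, 36, 37, 38, 42, 43, 44, 45, 46, 52, 53, 54, 62, 67, 68}. Then n can be written as a sum of pairwise distinct odd positive integers whose product is a perfect square if and only if n ∈ {9, 10}, or n ≥ 23 and n ∉ S. -/
/-!
Adding an odd square `t ^ 2` that exceeds `m` to a rational partition of `m` gives one of
`m + t ^ 2`, since every part of a partition of `m` is at most `m`. For `n ≥ 190`, the largest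
odd `t` with `t ^ 2 + 69 ≤ n` satisfies `n < 2 * t ^ 2`, so `n - t ^ 2` is an admissible value
below `t ^ 2`; strong induction reduces everything to `n < 190`. Below `69` an exhaustive search
over sets of odd parts settles both directions, and for `69 ≤ n < 190` the values not reached by
the square step get explicit partitions.
-/

/-- A rational partition of `n`: a finite set of pairwise distinct odd positive
integers whose sum is `n` and whose product is a perfect square. -/
def HasRationalPartition (n : ℕ) : Prop :=
  ∃ A : Finset ℕ, (∀ a ∈ A, Odd a ∧ 0 < a) ∧ (∑ a ∈ A, a) = n ∧ IsSquare (∏ a ∈ A, a)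

def RationalPartitionCriterion (n : ℕ) : Prop :=
  n ≤ 1 ∨ n ∈ ({9, 10} : Finset ℕ) ∨
    (23 ≤ n ∧ n ∉ ({27, 28, 29, 36, 37, 38, 42, 43, 44, 45, 46, 52, 53, 54, 62, 67, 68} : Finset ℕ))

instance : DecidablePred RationalPartitionCriterion := fun n => by
  unfold RationalPartitionCriterion
  infer_instance

theorem HasRationalPartition.add_odd_sq {m t : ℕ} (h : HasRationalPartition m) (ht : Odd t)
    (hmt : m < t ^ 2) : HasRationalPartition (m + t ^ 2) := by
  obtain ⟨A, hodd, hsum, hsq⟩ := h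
  have hnotMem : t ^ 2 ∉ A := fun hmem =>
    hmt.not_ge (hsum ▸ Finset.single_le_sum_of_canonicallyOrdered (f := fun a => a) hmem)
  refine ⟨insert (t ^ 2) A, ?_, ?_, ?_⟩
  · simp only [Finset.mem_insert, forall_eq_or_imp]
    exact ⟨⟨ht.pow, pow_pos ht.pos 2⟩, hodd⟩
  · rw [Finset.sum_insert hnotMem, hsum, add_comm]
  · rw [Finset.prod_insert hnotMem]
    exact (IsSquare.sq t).mul hsq

theorem exists_odd_sq_add_le_lt_two_mul_sq {n : ℕ} (hn : 190 ≤ n) :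
    ∃ t, Odd t ∧ t ^ 2 + 69 ≤ n ∧ n < 2 * t ^ 2 := by
  obtain ⟨m, rfl⟩ : ∃ m, n = m + 69 := ⟨n - 69, by omega⟩
  set s := Nat.sqrt m
  have hs_sq : s * s ≤ m := Nat.sqrt_le m
  have hs_succ : m < (s + 1) * (s + 1) := Nat.lt_succ_sqrt m
  have hs : 11 ≤ s := Nat.le_sqrt.mpr (by omega)
  -- `t` is the largest odd number `≤ s`; `t ≥ 11` makes `(t + 2) ^ 2 + 69 ≤ 2 * t ^ 2`.
  set t := 2 * ((s - 1) / 2) + 1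
  obtain ⟨ht, hts, hst⟩ : 11 ≤ t ∧ t ≤ s ∧ s ≤ t + 1 := by omega
  have hlow : t * t ≤ s * s := Nat.mul_le_mul hts hts
  have hhigh : (s + 1) * (s + 1) ≤ (t + 2) * (t + 2) := Nat.mul_le_mul (by omega) (by omega)
  refine ⟨t, odd_two_mul_add_one _, ?_, ?_⟩
  · nlinarith
  · nlinarith

def oddSquareSearch : ℕ → ℕ → ℕ → Bool
  | 0, p, n => n == 0 && decide (IsSquare p)
  | k + 1, p, n =>
      (2 * k + 1 ≤ n && oddSquareSearch k (p * (2 * k + 1)) (n - (2 * k + 1))) ||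
        oddSquareSearch k p n

theorem oddSquareSearch_iff (k p n : ℕ) :
    oddSquareSearch k p n = true ↔ ∃ A : Finset ℕ, (∀ a ∈ A, Odd a ∧ a < 2 * k) ∧
      ∑ a ∈ A, a = n ∧ IsSquare (p * ∏ a ∈ A, a) := by
  induction k generalizing p n with
  | zero =>
    simp only [oddSquareSearch, Bool.and_eq_true, beq_iff_eq, decide_eq_true_eq, mul_zero,
      Nat.not_lt_zero, and_false]
    constructor
    · rintro ⟨rfl, hsq⟩
      exact ⟨∅, by simp, by simp, by simpa using hsq⟩
    · rintro ⟨A, hA, rfl, hsq⟩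
      obtain rfl : A = ∅ := Finset.eq_empty_of_forall_notMem hA
      simpa using hsq
  | succ k ih =>
    simp only [oddSquareSearch, Bool.or_eq_true, Bool.and_eq_true, decide_eq_true_eq, ih]
    constructor
    · rintro (⟨hle, A, hA, hsum, hsq⟩ | ⟨A, hA, hsum, hsq⟩)
      · have hnotMem : 2 * k + 1 ∉ A := fun h => by have := (hA _ h).2; omega
        refine ⟨insert (2 * k + 1) A, ?_, ?_, ?_⟩
        · simp only [Finset.mem_insert, forall_eq_or_imp]
          exact ⟨⟨odd_two_mul_add_one k, by omega⟩, fun a ha => ⟨(hA a ha).1, (hA a ha).2.trans (by omega)⟩⟩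
        · rw [Finset.sum_insert hnotMem, hsum]
          omega
        · rwa [Finset.prod_insert hnotMem, ← mul_assoc]
      · exact ⟨A, fun a ha => ⟨(hA a ha).1, (hA a ha).2.trans (by omega)⟩, hsum, hsq⟩
    · rintro ⟨A, hA, hsum, hsq⟩
      by_cases hmem : 2 * k + 1 ∈ A
      · left
        have hle := hsum ▸ Finset.single_le_sum_of_canonicallyOrdered (f := fun a => a) hmem
        refine ⟨hle, A.erase (2 * k + 1), fun a ha => ⟨(hA a (Finset.mem_of_mem_erase ha)).1, ?_⟩,
          ?_, ?_⟩
        · obtain ⟨⟨m, rfl⟩, hlt⟩ := hA a (Finset.mem_of_mem_erase ha)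
          have := Finset.ne_of_mem_erase ha
          omega
        · rw [← hsum, ← Finset.add_sum_erase A (fun a => a) hmem]
          omega
        · rwa [mul_assoc, Finset.mul_prod_erase A (fun a => a) hmem]
      · right
        refine ⟨A, fun a ha => ⟨(hA a ha).1, ?_⟩, hsum, hsq⟩
        obtain ⟨⟨m, rfl⟩, hlt⟩ := hA a ha
        have : 2 * m + 1 ≠ 2 * k + 1 := fun h => hmem (h ▸ ha)
        omega

theorem hasRationalPartition_iff_oddSquareSearch (n : ℕ) :
    HasRationalPartition n ↔ oddSquareSearch n 1 n = true := by
  simp only [oddSquareSearch_iff, one_mul]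
  constructor
  · rintro ⟨A, hA, hsum, hsq⟩
    refine ⟨A, fun a ha => ⟨(hA a ha).1, ?_⟩, hsum, hsq⟩
    have hle := hsum ▸ Finset.single_le_sum_of_canonicallyOrdered (f := fun a => a) ha
    have hpos := (hA a ha).2
    omega
  · rintro ⟨A, hA, hsum, hsq⟩
    exact ⟨A, fun a ha => ⟨(hA a ha).1, (hA a ha).1.pos⟩, hsum, hsq⟩

theorem oddSquareSearch_eq_decide_criterion :
    ∀ n < 69, oddSquareSearch n 1 n = decide (RationalPartitionCriterion n) := by
  decide +kernel

def seedPartitions : List (Finset ℕ) := [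
  {3, 7, 9, 15, 35}, {7, 63}, {1, 7, 63}, {1, 5, 25, 45}, {3, 5, 7, 27, 35},
  {1, 3, 5, 7, 27, 35}, {1, 3, 11, 15, 55}, {1, 3, 7, 15, 25, 35}, {3, 21, 63}, {5, 9, 13, 65},
  {1, 5, 9, 13, 65}, {1, 3, 5, 7, 15, 63}, {7, 25, 63}, {1, 3, 5, 11, 33, 45}, {5, 45, 49},
  {1, 5, 45, 49}, {1, 3, 7, 27, 63}, {1, 3, 5, 11, 27, 55}, {5, 35, 63}, {5, 9, 45, 49},
  {1, 5, 9, 45, 49}, {1, 3, 7, 9, 27, 63}, {1, 3, 15, 35, 63}, {1, 3, 7, 11, 33, 63}, {7, 49, 63},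
  {13, 45, 65}, {1, 13, 45, 65}, {1, 5, 25, 45, 49}, {1, 3, 7, 13, 39, 63},
  {1, 3, 5, 7, 19, 35, 57}, {1, 5, 13, 49, 65}, {1, 3, 5, 27, 35, 63}, {1, 3, 5, 7, 21, 35, 63},
  {35, 45, 63}, {13, 25, 45, 65}, {1, 13, 25, 45, 65}, {1, 3, 5, 13, 19, 57, 65},
  {11, 35, 55, 63}, {1, 11, 35, 55, 63}, {1, 3, 15, 35, 49, 63}, {1, 3, 5, 7, 33, 55, 63},
  {1, 13, 45, 49, 65}, {1, 3, 11, 39, 55, 65}, {1, 3, 5, 17, 35, 51, 63}, {1, 3, 5, 7, 39, 63, 65},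
  {1, 3, 5, 11, 15, 35, 55, 63}, {3, 33, 35, 55, 63}]

theorem seedPartitions_valid :
    ∀ A ∈ seedPartitions, (∀ a ∈ A, Odd a ∧ 0 < a) ∧ IsSquare (∏ a ∈ A, a) := by
  decide +kernel

theorem exists_seed_or_odd_sq_step {n : ℕ} (hn : 69 ≤ n) :
    (∃ A ∈ seedPartitions, ∑ a ∈ A, a = n) ∨
      ∃ t, Odd t ∧ t ^ 2 ≤ n ∧ n - t ^ 2 < t ^ 2 ∧ RationalPartitionCriterion (n - t ^ 2) := by
  by_cases hlarge : 190 ≤ n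
  · obtain ⟨t, ht, hle, hlt⟩ := exists_odd_sq_add_le_lt_two_mul_sq hlarge
    refine Or.inr ⟨t, ht, by omega, by omega, Or.inr (Or.inr ⟨by omega, ?_⟩)⟩
    simp only [Finset.mem_insert, Finset.mem_singleton]
    omega
  have hsmall : ∀ n < 190, 69 ≤ n → (∃ A ∈ seedPartitions, ∑ a ∈ A, a = n) ∨
      ∃ t < 14, Odd t ∧ t ^ 2 ≤ n ∧ n - t ^ 2 < t ^ 2 ∧ RationalPartitionCriterion (n - t ^ 2) := by
    decide +kernel
  obtain hseed | ⟨t, -, hstep⟩ := hsmall n (by omega) hn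
  exacts [Or.inl hseed, Or.inr ⟨t, hstep⟩]

theorem hasRationalPartition_of_criterion {n : ℕ} (h : RationalPartitionCriterion n) :
    HasRationalPartition n := by
  induction n using Nat.strong_induction_on with
  | _ n ih =>
  by_cases hsmall : n < 69
  · rw [hasRationalPartition_iff_oddSquareSearch, oddSquareSearch_eq_decide_criterion n hsmall]
    exact decide_eq_true h
  obtain ⟨A, hA, rfl⟩ | ⟨t, ht, hle, hlt, hcrit⟩ := exists_seed_or_odd_sq_step (not_lt.mp hsmall)
  · obtain ⟨hodd, hsq⟩ := seedPartitions_valid A hA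
    exact ⟨A, hodd, rfl, hsq⟩
  · have htpos : 0 < t ^ 2 := pow_pos ht.pos 2
    have := (ih (n - t ^ 2) (by omega) hcrit).add_odd_sq ht hlt
    rwa [Nat.sub_add_cancel hle] at this

theorem criterion_of_hasRationalPartition {n : ℕ} (h : HasRationalPartition n) :
    RationalPartitionCriterion n := by
  by_cases hsmall : n < 69
  · rw [hasRationalPartition_iff_oddSquareSearch, oddSquareSearch_eq_decide_criterion n hsmall]
      at h
    exact of_decide_eq_true h
  · refine Or.inr (Or.inr ⟨by omega, ?_⟩)
    simp only [Finset.mem_insert, Finset.mem_singleton]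
    omega

theorem hasRationalPartition_iff_criterion (n : ℕ) :
    HasRationalPartition n ↔ RationalPartitionCriterion n :=
  ⟨criterion_of_hasRationalPartition, hasRationalPartition_of_criterion⟩

theorem hasRationalPartition_iff (n : ℕ) (hn : 2 ≤ n) :
    HasRationalPartition n ↔
      n ∈ ({9, 10} : Finset ℕ) ∨
        (23 ≤ n ∧ n ∉ ({27, 28, 29, 36, 37, 38, 42, 43, 44, 45, 46, 52, 53, 54, 62, 67,
          68} : Finset ℕ)) := by
  rw [hasRationalPartition_iff_criterion, RationalPartitionCriterion,
    or_iff_right (by omega : ¬n ≤ 1)]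
end

section
/- Let m be an odd positive integer and let r be an integer coprime to m, and let μ_r denote the permutation of ℤ/mℤ given by multiplication by r. Then the sign of μ_r equals (-1)^T, where T = ∑_{d ∣ m, d > 1} φ(d)/ord_d(r), the sum being over the divisors d of m with d > 1, φ being Euler's totient function and ord_d(r) the multiplicative order of r modulo d. -/
/-!
Group `ZMod m` by additive order: `(d, u) ↦ (m / d) • u` identifies `Σ d ∣ m, (ZMod d)ˣ` with
`ZMod m`, and transports `μ_r` to right multiplication by `r` on each `(ZMod d)ˣ`. On a finite
group, right multiplication by `g` is one cycle of length `orderOf g` on each left coset of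
`⟨g⟩`, so its sign is `(-1) ^ (|G| / orderOf g * (orderOf g - 1))`. For odd `d > 1` the totient
`φ d = (φ d / o) * o` is even, so this exponent has the parity of `φ d / o`; `d = 1` contributes
nothing.
-/

open Equiv Equiv.Perm Finset Subgroup

theorem Equiv.Perm.sign_sigmaCongrRight {ι : Type*} [Fintype ι] [DecidableEq ι] {β : ι → Type*}
    [∀ i, Fintype (β i)] [∀ i, DecidableEq (β i)] (σ : ∀ i, Perm (β i)) :
    sign (sigmaCongrRight σ) = ∏ i, sign (σ i) := by
  suffices sign.comp (sigmaCongrRightHom β) = ∏ i, sign.comp (Pi.evalMonoidHom _ i) by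
    simpa using DFunLike.congr_fun this σ
  refine MonoidHom.pi_ext fun i τ => ?_
  have hτ : sigmaCongrRight (Pi.mulSingle i τ) = τ.extendDomain (sigmaSubtype i).symm := by
    ext ⟨j, b⟩ : 1
    rcases eq_or_ne j i with rfl | hji
    · rw [τ.extendDomain_apply_subtype (sigmaSubtype j).symm (b := ⟨j, b⟩) rfl]
      simp only [sigmaCongrRight_apply, Pi.mulSingle_eq_same]
      rfl
    · rw [τ.extendDomain_apply_not_subtype (sigmaSubtype i).symm (b := ⟨j, b⟩) hji]
      simp [Pi.mulSingle_eq_of_ne hji]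
  simp only [MonoidHom.coe_comp, Function.comp_apply, sigmaCongrRightHom_apply, hτ,
    sign_extendDomain, MonoidHom.finsetProd_apply, Pi.evalMonoidHom_apply]
  rw [Fintype.prod_eq_single i fun j hji => by simp [Pi.mulSingle_eq_of_ne hji]]
  simp

theorem sign_mulRight_zpowers {G : Type*} [Group G] {g : G} (hg : IsOfFinOrder g)
    [Fintype (zpowers g)] [DecidableEq (zpowers g)] :
    sign (Equiv.mulRight (⟨g, mem_zpowers g⟩ : zpowers g)) = (-1) ^ (orderOf g - 1) := by
  refine (sign_eq_sign_of_equiv _ _ (finEquivZPowers hg) fun i => ?_).symm.trans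
    (sign_finRotate _)
  ext
  simp [finEquivZPowers_apply, finRotate_apply, Fin.val_add, pow_mod_orderOf, pow_succ]

/-- `groupEquivQuotientProdSubgroup.symm`, but with a forward map that unfolds to `q.out * h`. -/
noncomputable def Subgroup.quotientProdEquiv {G : Type*} [Group G] (H : Subgroup G) :
    (G ⧸ H) × H ≃ G where
  toFun p := p.1.out * p.2
  invFun x := (x, ⟨(x : G ⧸ H).out⁻¹ * x, QuotientGroup.eq.mp (QuotientGroup.out_eq' _)⟩)
  left_inv := by
    rintro ⟨q, h⟩
    have hq : ((q.out * h : G) : G ⧸ H) = q := by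
      rw [QuotientGroup.mk_mul_of_mem _ h.2, QuotientGroup.out_eq']
    ext
    · exact hq
    · simp [hq]
  right_inv x := mul_inv_cancel_left _ _

theorem sign_mulRight {G : Type*} [Group G] [Fintype G] [DecidableEq G] (g : G) :
    sign (Equiv.mulRight g) = (-1) ^ (Fintype.card G / orderOf g * (orderOf g - 1)) := by
  classical
  have hg : IsOfFinOrder g := isOfFinOrder_of_finite g
  have hcoset : ∀ p, (zpowers g).quotientProdEquiv
      (prodCongrRight (fun _ => Equiv.mulRight ⟨g, mem_zpowers g⟩) p) =
      Equiv.mulRight g ((zpowers g).quotientProdEquiv p) := fun p => (mul_assoc _ _ _).symm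
  have hindex : Fintype.card (G ⧸ zpowers g) = Fintype.card G / orderOf g := by
    rw [← Nat.card_zpowers, Fintype.card_eq_nat_card, Fintype.card_eq_nat_card,
      ← (zpowers g).index_mul_card, Nat.mul_div_cancel _ Nat.card_pos, Subgroup.index]
  rw [← sign_eq_sign_of_equiv _ _ _ hcoset, sign_prodCongrRight, prod_const, card_univ,
    sign_mulRight_zpowers hg, ← pow_mul, hindex, mul_comm]

theorem neg_one_pow_mul_sub_one_of_even {k o : ℕ} (ho : 0 < o) (h : Even (k * o)) :
    ((-1 : ℤˣ)) ^ (k * (o - 1)) = (-1) ^ k := by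
  rw [← Nat.sub_add_cancel (Nat.le_mul_of_pos_right k ho), ← Nat.mul_sub_one, Nat.even_iff] at h
  rw [Int.units_pow_eq_pow_mod_two, Int.units_pow_eq_pow_mod_two (-1) k]
  congr 1
  omega

instance Nat.neZero_of_mem_divisors {m : ℕ} (d : m.divisors) : NeZero (d : ℕ) :=
  ⟨(Nat.pos_of_mem_divisors d.2).ne'⟩

namespace ZMod

theorem natCast_div_mul_val_mul_intCast {m d : ℕ} [NeZero d] (hd : d ∣ m) (x : ZMod d) (k : ℤ) :
    ((m / d * (x * k).val : ℕ) : ZMod m) = ((m / d * x.val : ℕ) : ZMod m) * k := by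
  have hval : (((x * k).val : ℕ) : ℤ) ≡ (x.val : ℤ) * k [ZMOD d] :=
    (intCast_eq_intCast_iff _ _ d).mp (by simp)
  have hscaled := hval.mul_left' (c := ((m / d : ℕ) : ℤ))
  rw [← Nat.cast_mul, Nat.div_mul_cancel hd] at hscaled
  have := (intCast_eq_intCast_iff _ _ m).mpr hscaled
  simp only [Int.cast_mul, Int.cast_natCast] at this
  rw [Nat.cast_mul, Nat.cast_mul, this, mul_assoc]

def ofDivisorsUnits (m : ℕ) (x : Σ d : m.divisors, (ZMod d)ˣ) : ZMod m :=
  (m / x.1 * (x.2 : ZMod x.1).val : ℕ)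

theorem ofDivisorsUnits_surjective (m : ℕ) [NeZero m] :
    Function.Surjective (ofDivisorsUnits m) := by
  intro z
  set g := z.val.gcd m
  have hg : 0 < g := Nat.gcd_pos_of_pos_right _ (NeZero.pos m)
  have hgm : g ∣ m := Nat.gcd_dvd_right _ _
  have hgz : g ∣ z.val := Nat.gcd_dvd_left _ _
  have hmem : m / g ∈ m.divisors := Nat.mem_divisors.mpr ⟨Nat.div_dvd_of_dvd hgm, NeZero.ne m⟩
  refine ⟨⟨⟨m / g, hmem⟩, unitOfCoprime (z.val / g) (Nat.coprime_div_gcd_div_gcd hg)⟩, ?_⟩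
  have hval : ((z.val / g : ℕ) : ZMod (m / g)).val = z.val / g :=
    val_cast_of_lt (Nat.div_lt_div_of_lt_of_dvd hgm z.val_lt)
  simp only [ofDivisorsUnits, coe_unitOfCoprime, hval, Nat.div_div_self hgm (NeZero.ne m),
    Nat.mul_div_cancel' hgz, natCast_zmod_val]

theorem ofDivisorsUnits_bijective (m : ℕ) [NeZero m] :
    Function.Bijective (ofDivisorsUnits m) := by
  refine (Fintype.bijective_iff_surjective_and_card _).mpr ⟨ofDivisorsUnits_surjective m, ?_⟩
  simp only [Fintype.card_sigma, card_units_eq_totient, card]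
  rw [Finset.sum_coe_sort m.divisors Nat.totient, Nat.sum_totient]

theorem sign_mulRight_units_of_odd {d : ℕ} [NeZero d] (hd : Odd d) (u : (ZMod d)ˣ) :
    sign (Equiv.mulRight u) = if 1 < d then (-1) ^ (d.totient / orderOf u) else 1 := by
  rw [sign_mulRight, card_units_eq_totient]
  split_ifs with hd1
  · have htot : Even d.totient := Nat.totient_even (by obtain ⟨k, rfl⟩ := hd; omega)
    apply neg_one_pow_mul_sub_one_of_even (orderOf_pos u)
    rwa [Nat.div_mul_cancel (card_units_eq_totient d ▸ orderOf_dvd_card)]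
  · obtain rfl : d = 1 := by have := NeZero.pos d; omega
    simp [Subsingleton.elim u 1]

end ZMod

theorem sign_mul_perm_zmod (m : ℕ) [NeZero m] (hm : Odd m) (r : ℤ)
    (hr : IsCoprime r (m : ℤ)) (σ : Equiv.Perm (ZMod m))
    (hσ : ∀ z : ZMod m, σ z = (r : ZMod m) * z) :
    Equiv.Perm.sign σ =
      (-1) ^ (∑ d ∈ m.divisors.filter (fun d => 1 < d),
        d.totient / orderOf ((r : ZMod d))) := by
  have hdvd (d : m.divisors) : (d : ℕ) ∣ m := Nat.dvd_of_mem_divisors d.2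
  let u (d : m.divisors) : (ZMod d)ˣ :=
    ZMod.unitOfIsCoprime r (hr.of_isCoprime_of_dvd_right (Int.natCast_dvd_natCast.mpr (hdvd d)))
  have hconj : sign (Perm.sigmaCongrRight fun d => Equiv.mulRight (u d)) = sign σ :=
    sign_eq_sign_of_equiv _ _ (.ofBijective _ (ZMod.ofDivisorsUnits_bijective m)) fun ⟨d, x⟩ => by
      rw [hσ, mul_comm]
      exact ZMod.natCast_div_mul_val_mul_intCast (hdvd d) x r
  calc sign σ = ∏ d : m.divisors, sign (Equiv.mulRight (u d)) := by
        rw [← hconj, sign_sigmaCongrRight]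
    _ = ∏ d ∈ m.divisors, if 1 < d then (-1) ^ (d.totient / orderOf (r : ZMod d)) else 1 := by
        rw [← Finset.prod_coe_sort m.divisors]
        refine Fintype.prod_congr _ _ fun d => ?_
        rw [ZMod.sign_mulRight_units_of_odd (hm.of_dvd_nat (hdvd d)), ← orderOf_units,
          ZMod.coe_unitOfIsCoprime]
    _ = _ := by rw [← prod_filter, prod_pow_eq_pow_sum]
end

section
/- Let m be an odd positive integer with prime factorization m = ∏_{p ∈ P} p^{k_p}, and let r be an integer coprime to m; let μ_r denote the permutation of ℤ/mℤ given by multiplication by r. Then the sign of μ_r equals (-1)^U, where U = ∑_{p ∈ P} k_p · ((p-1)_2 / ord_p(r)_2), with t_2 denoting the largest power of 2 dividing t and ord_p(r) the multiplicative order of r modulo p. -/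
/-!
By the Chinese remainder theorem, multiplication by `r` on `ZMod (a * b)` is the product of the
multiplications on `ZMod a` and `ZMod b`, whose signs multiply when `a` and `b` are odd; so it
suffices to treat `m = p ^ k`. The ring `ZMod (p ^ (k + 1))` is the disjoint union of its units
and of `p • ZMod (p ^ (k + 1)) ≅ ZMod (p ^ k)`, on which `r` acts as on `ZMod (p ^ k)`. On the unit
group, of order `N = p ^ k (p - 1)`, multiplication by `r` has all its cycles of length
`d = ord_{p^(k+1)}(r)`, so its sign is `(-1) ^ (N + N / d)`. Since `ord_p(r) ∣ d ∣ ord_p(r) p ^ k`,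
`d` and `ord_p(r)` have the same `2`-part, so `N / d` is odd exactly when
`(p - 1)₂ = ord_p(r)₂`, i.e. when `(p - 1)₂ / ord_p(r)₂` is odd: each of the `k` levels
contributes that quotient to the exponent.
-/

open Equiv Equiv.Perm Finset

namespace Equiv.Perm

variable {α : Type*}

def IsSemiregular (σ : Perm α) : Prop :=
  ∀ (k : ℕ) (x : α), (σ ^ k) x = x → σ ^ k = 1

variable [Fintype α] [DecidableEq α]

theorem IsSemiregular.eq_orderOf_of_mem_cycleType {σ : Perm α} (hσ : σ.IsSemiregular) {n : ℕ}
    (hn : n ∈ σ.cycleType) : n = orderOf σ := by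
  obtain ⟨c, τ, rfl, hcτ, hc, rfl⟩ := mem_cycleType_iff.1 hn
  obtain ⟨x, hx⟩ := hc.nonempty_support
  have hτx : τ x = x := (hcτ x).resolve_left (mem_support.1 hx)
  refine dvd_antisymm (dvd_of_mem_cycleType hn) (orderOf_dvd_of_pow_eq_one (hσ _ x ?_))
  rw [hcτ.commute.mul_pow, mul_apply, pow_apply_eq_self_of_apply_eq_self hτx, ← hc.orderOf,
    pow_orderOf_eq_one, one_apply]

theorem IsSemiregular.sign {σ : Perm α} (hσ : σ.IsSemiregular) :
    sign σ = (-1) ^ (Fintype.card α + Fintype.card α / orderOf σ) := by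
  rcases eq_or_ne σ 1 with rfl | hσ1
  · rw [map_one, orderOf_one, Nat.div_one, Even.neg_one_pow ⟨_, rfl⟩]
  have hsupp : σ.support = univ :=
    eq_univ_of_forall fun x => mem_support.2 fun hx => hσ1 (by simpa using hσ 1 x (by simpa))
  have hrep : σ.cycleType = Multiset.replicate (Multiset.card σ.cycleType) (orderOf σ) :=
    Multiset.eq_replicate_card.2 fun n hn => hσ.eq_orderOf_of_mem_cycleType hn
  have hsum : σ.cycleType.sum = Fintype.card α := by rw [sum_cycleType, hsupp, card_univ]
  have hcard : Multiset.card σ.cycleType * orderOf σ = Fintype.card α := by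
    rw [← hsum, hrep, Multiset.sum_replicate, smul_eq_mul, Multiset.card_replicate]
  rw [sign_of_cycleType, hsum, ← hcard, Nat.mul_div_cancel _ (orderOf_pos σ)]

theorem sign_prodCongr {β : Type*} [Fintype β] [DecidableEq β] (σ : Perm α) (τ : Perm β) :
    sign (σ.prodCongr τ) = sign σ ^ Fintype.card β * sign τ ^ Fintype.card α := by
  have h : σ.prodCongr τ = prodCongrRight (fun _ => τ) * prodCongrLeft (fun _ => σ) := by
    ext ⟨a, b⟩ <;> rfl
  rw [h, map_mul, sign_prodCongrRight, sign_prodCongrLeft, prod_const, prod_const, card_univ,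
    card_univ, mul_comm]

section Group

variable {G : Type*} [Group G]

theorem isSemiregular_mulLeft (g : G) : (Equiv.mulLeft g).IsSemiregular := by
  intro k x hx
  rw [Equiv.pow_mulLeft] at hx ⊢
  rw [show g ^ k = 1 from mul_eq_right.1 hx]
  exact Equiv.mulLeft_one

theorem orderOf_mulLeft (g : G) : orderOf (Equiv.mulLeft g) = orderOf g :=
  orderOf_injective (MulAction.toPermHom G G) MulAction.toPerm_injective g

theorem sign_mulLeft [Fintype G] [DecidableEq G] (g : G) :
    sign (Equiv.mulLeft g) = (-1) ^ (Fintype.card G + Fintype.card G / orderOf g) := by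
  rw [(isSemiregular_mulLeft g).sign, orderOf_mulLeft]

end Group

end Equiv.Perm

theorem even_div_iff_padicValNat_two_lt {a b : ℕ} (hb : b ≠ 0) (hab : a ∣ b) :
    Even (b / a) ↔ padicValNat 2 a < padicValNat 2 b := by
  have hba : b / a ≠ 0 := (Nat.div_ne_zero_iff_of_dvd hab).2 ⟨hb, ne_zero_of_dvd_ne_zero hb hab⟩
  have h2 := padicValNat_dvd_iff_le (p := 2) (n := 1) hba
  rw [pow_one] at h2
  rw [even_iff_two_dvd, h2, padicValNat.div_of_dvd hab]
  omega

theorem even_two_pow_div_iff {m n : ℕ} (h : n ≤ m) : Even (2 ^ m / 2 ^ n) ↔ n < m := by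
  rw [Nat.pow_div h two_pos, Nat.even_pow]
  simp only [even_two, true_and]
  omega

-- Used with `e`, `d` the orders of `r` modulo `p` and modulo `p ^ (k + 1)`.
theorem even_prime_pow_mul_pred_div_iff {p k d e : ℕ} (hp : 1 < p) (hodd : Odd p)
    (he : e ∣ p - 1) (hed : e ∣ d) (hde : d ∣ e * p ^ k) :
    Even (p ^ k * (p - 1) / d) ↔ Even (2 ^ padicValNat 2 (p - 1) / 2 ^ padicValNat 2 e) := by
  have hp1 : p - 1 ≠ 0 := by omega
  have he0 : e ≠ 0 := ne_zero_of_dvd_ne_zero hp1 he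
  have hpk : p ^ k ≠ 0 := pow_ne_zero k (by omega)
  have hval_pk : padicValNat 2 (p ^ k) = 0 :=
    padicValNat.eq_zero_of_not_dvd (hodd.pow.not_two_dvd_nat)
  obtain ⟨c, rfl⟩ := hed
  have hc : c ∣ p ^ k := Nat.dvd_of_mul_dvd_mul_left (Nat.pos_of_ne_zero he0) hde
  have hc0 : c ≠ 0 := ne_zero_of_dvd_ne_zero hpk hc
  have hval_c : padicValNat 2 c = 0 :=
    padicValNat.eq_zero_of_not_dvd (hodd.pow.of_dvd_nat hc).not_two_dvd_nat
  have hdN : e * c ∣ p ^ k * (p - 1) := mul_comm (p - 1) (p ^ k) ▸ mul_dvd_mul he hc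
  rw [even_div_iff_padicValNat_two_lt (mul_ne_zero hpk hp1) hdN,
    even_two_pow_div_iff ((padicValNat_dvd_iff_le hp1).1 (pow_padicValNat_dvd.trans he)),
    padicValNat.mul he0 hc0, padicValNat.mul hpk hp1, hval_c, hval_pk, add_zero, zero_add]

theorem orderOf_intCast_dvd_orderOf_intCast {m n : ℕ} (h : m ∣ n) (r : ℤ) :
    orderOf (r : ZMod m) ∣ orderOf (r : ZMod n) := by
  simpa using orderOf_map_dvd (ZMod.castHom h (ZMod m)).toMonoidHom (r : ZMod n)

theorem orderOf_intCast_zmod_pow_succ_dvd (p k : ℕ) (r : ℤ) :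
    orderOf (r : ZMod (p ^ (k + 1))) ∣ orderOf (r : ZMod p) * p ^ k := by
  apply orderOf_dvd_of_pow_eq_one
  have h1 : (p : ℤ) ∣ r ^ orderOf (r : ZMod p) - 1 := by
    rw [← ZMod.intCast_zmod_eq_zero_iff_dvd]
    push_cast
    rw [pow_orderOf_eq_one, sub_self]
  have h2 := dvd_sub_pow_of_dvd_sub h1 k
  rw [one_pow, ← pow_mul] at h2
  rw [← sub_eq_zero]
  exact_mod_cast (ZMod.intCast_zmod_eq_zero_iff_dvd _ _).2 (by exact_mod_cast h2)

namespace ZMod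

def mulPowSuccHom (p k : ℕ) : ZMod (p ^ k) →+ ZMod (p ^ (k + 1)) :=
  ZMod.lift (p ^ k) ⟨(AddMonoidHom.mulLeft (p : ZMod (p ^ (k + 1)))).comp (Int.castAddHom _), by
    simp only [AddMonoidHom.coe_comp, Function.comp_apply, Int.coe_castAddHom, Int.cast_natCast,
      AddMonoidHom.coe_mulLeft, ← Nat.cast_mul, ← pow_succ', ZMod.natCast_self]⟩

variable {p k : ℕ}

theorem mulPowSuccHom_intCast (t : ℤ) : mulPowSuccHom p k t = p * t :=
  ZMod.lift_coe _ _ t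

theorem mulPowSuccHom_intCast_mul (r : ℤ) (z : ZMod (p ^ k)) :
    mulPowSuccHom p k (r * z) = r * mulPowSuccHom p k z := by
  rw [← zsmul_eq_mul, map_zsmul, zsmul_eq_mul]

theorem mulPowSuccHom_injective (hp : p ≠ 0) : Function.Injective (mulPowSuccHom p k) := by
  rw [injective_iff_map_eq_zero]
  intro z hz
  obtain ⟨t, rfl⟩ := ZMod.intCast_surjective z
  rw [mulPowSuccHom_intCast, ← Int.cast_natCast, ← Int.cast_mul,
    ZMod.intCast_zmod_eq_zero_iff_dvd, Nat.cast_pow, pow_succ'] at hz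
  rw [ZMod.intCast_zmod_eq_zero_iff_dvd, Nat.cast_pow]
  exact (mul_dvd_mul_iff_left (by exact_mod_cast hp)).1 hz

theorem not_isUnit_iff_mem_range_mulPowSuccHom (hp : p.Prime) {x : ZMod (p ^ (k + 1))} :
    ¬ IsUnit x ↔ x ∈ Set.range (mulPowSuccHom p k) := by
  obtain ⟨s, rfl⟩ := ZMod.intCast_surjective x
  constructor
  · intro hs
    have hps : (p : ℤ) ∣ s := by
      by_contra h
      refine hs ((coe_int_isUnit_iff_isCoprime _ _).2 ?_)
      rw [Nat.cast_pow]
      exact ((Nat.prime_iff_prime_int.1 hp).coprime_iff_not_dvd.2 h).pow_left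
    obtain ⟨w, rfl⟩ := hps
    exact ⟨w, by push_cast [mulPowSuccHom_intCast]; rfl⟩
  · rintro ⟨z, hz⟩ hs
    obtain ⟨t, rfl⟩ := ZMod.intCast_surjective z
    rw [← hz, mulPowSuccHom_intCast] at hs
    have : Fact p.Prime := ⟨hp⟩
    have hs' := hs.map (ZMod.castHom (dvd_pow_self p k.succ_ne_zero) (ZMod p))
    rw [map_mul, map_natCast, ZMod.natCast_self, zero_mul] at hs'
    exact not_isUnit_zero hs'

-- The second summand goes to the non-units through `z ↦ p * z`.
open Classical in
noncomputable def unitsSumEquiv (hp : p.Prime) (k : ℕ) :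
    (ZMod (p ^ (k + 1)))ˣ ⊕ ZMod (p ^ k) ≃ ZMod (p ^ (k + 1)) :=
  let units : (ZMod (p ^ (k + 1)))ˣ ≃ {x : ZMod (p ^ (k + 1)) // IsUnit x} :=
    { toFun := fun u => ⟨u, u.isUnit⟩
      invFun := fun x => x.2.unit
      left_inv := fun _ => Units.ext rfl
      right_inv := fun _ => Subtype.ext rfl }
  let nonunits : ZMod (p ^ k) ≃ {x : ZMod (p ^ (k + 1)) // ¬ IsUnit x} :=
    (Equiv.ofInjective _ (mulPowSuccHom_injective hp.ne_zero)).trans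
      (Equiv.subtypeEquivRight fun _ => (not_isUnit_iff_mem_range_mulPowSuccHom hp).symm)
  (units.sumCongr nonunits).trans (Equiv.sumCompl IsUnit)

end ZMod

section PrimePower

variable {p : ℕ} [hp : Fact p.Prime]

theorem sign_mul_perm_zmod_prime_pow_succ {k : ℕ} (u : (ZMod (p ^ (k + 1)))ˣ) {r : ℤ}
    (hu : (u : ZMod (p ^ (k + 1))) = r) {σ : Perm (ZMod (p ^ (k + 1)))}
    (hσ : ∀ z, σ z = r * z) {τ : Perm (ZMod (p ^ k))} (hτ : ∀ z, τ z = r * z) :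
    sign σ = sign (Equiv.mulLeft u) * sign τ := by
  rw [← sign_sumCongr]
  refine (sign_eq_sign_of_equiv _ _ (ZMod.unitsSumEquiv hp.out k) ?_).symm
  rintro (v | z)
  · change ((u * v : (ZMod (p ^ (k + 1)))ˣ) : ZMod (p ^ (k + 1))) = σ v
    rw [hσ, Units.val_mul, hu]
  · change ZMod.mulPowSuccHom p k (τ z) = σ (ZMod.mulPowSuccHom p k z)
    rw [hσ, hτ, ZMod.mulPowSuccHom_intCast_mul]

theorem sign_mul_perm_zmod_prime_pow (hodd : Odd p) {r : ℤ} (hr : IsCoprime r p) (k : ℕ)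
    (σ : Perm (ZMod (p ^ k))) (hσ : ∀ z, σ z = r * z) :
    sign σ = (-1) ^ (k * (2 ^ padicValNat 2 (p - 1) /
      2 ^ padicValNat 2 (orderOf (r : ZMod p)))) := by
  induction k with
  | zero =>
    have : Subsingleton (ZMod (p ^ 0)) := by rw [pow_zero]; infer_instance
    rw [Subsingleton.elim σ 1, map_one, zero_mul, pow_zero]
  | succ k ih =>
    have hcop (j : ℕ) : IsCoprime r ((p ^ j : ℕ) : ℤ) := by push_cast; exact hr.pow_right
    set u := ZMod.unitOfIsCoprime r (hcop (k + 1))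
    set e := orderOf (r : ZMod p)
    have hcard : Fintype.card (ZMod (p ^ (k + 1)))ˣ = p ^ k * (p - 1) := by
      rw [ZMod.card_units_eq_totient, Nat.totient_prime_pow_succ hp.out]
    have hu : orderOf u = orderOf (r : ZMod (p ^ (k + 1))) := orderOf_units.symm
    have he : e ∣ p - 1 := ZMod.orderOf_dvd_card_sub_one (ZMod.unitOfIsCoprime r hr).ne_zero
    have heu : e ∣ orderOf u :=
      hu ▸ orderOf_intCast_dvd_orderOf_intCast (dvd_pow_self p k.succ_ne_zero) r
    have hue : orderOf u ∣ e * p ^ k := hu ▸ orderOf_intCast_zmod_pow_succ_dvd p k r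
    have hN : Even (p ^ k * (p - 1)) := (Nat.Odd.sub_odd hodd odd_one).mul_left _
    have hparity : Even (p ^ k * (p - 1) + p ^ k * (p - 1) / orderOf u) ↔
        Even (2 ^ padicValNat 2 (p - 1) / 2 ^ padicValNat 2 e) := by
      rw [Nat.even_add, even_prime_pow_mul_pred_div_iff hp.out.one_lt hodd he heu hue,
        iff_true_left hN]
    rw [sign_mul_perm_zmod_prime_pow_succ u rfl hσ
      (τ := Units.mulLeft (ZMod.unitOfIsCoprime r (hcop k))) fun _ => rfl, ih _ fun _ => rfl,
      sign_mulLeft, hcard, neg_one_pow_congr hparity, ← pow_add, add_mul, one_mul, add_comm]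

end PrimePower

theorem Int.units_pow_of_odd (u : ℤˣ) {n : ℕ} (hn : Odd n) : u ^ n = u := by
  rw [Int.units_pow_eq_pow_mod_two, Nat.odd_iff.1 hn, pow_one]

theorem sign_mul_perm_zmod_mul {a b : ℕ} [NeZero a] [NeZero b] (hab : a.Coprime b) (ha : Odd a)
    (hb : Odd b) {r : ℤ} {σ : Perm (ZMod (a * b))} {σa : Perm (ZMod a)} {σb : Perm (ZMod b)}
    (hσ : ∀ z, σ z = r * z) (hσa : ∀ z, σa z = r * z) (hσb : ∀ z, σb z = r * z) :
    sign σ = sign σa * sign σb := by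
  rw [sign_eq_sign_of_equiv σ (σa.prodCongr σb) (ZMod.chineseRemainder hab).toEquiv,
    sign_prodCongr, ZMod.card, ZMod.card, Int.units_pow_of_odd _ hb, Int.units_pow_of_odd _ ha]
  intro z
  ext <;> simp [hσ, hσa, hσb]

theorem sum_primeFactors_factorization_mul_mul {a b : ℕ} (ha : a ≠ 0) (hb : b ≠ 0) (g : ℕ → ℕ) :
    ∑ p ∈ (a * b).primeFactors, (a * b).factorization p * g p =
      ∑ p ∈ a.primeFactors, a.factorization p * g p +
        ∑ p ∈ b.primeFactors, b.factorization p * g p := by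
  have hsum (n : ℕ) : ∑ p ∈ n.primeFactors, n.factorization p * g p =
      n.factorization.sum fun p k => k * g p := by
    rw [Finsupp.sum, Nat.support_factorization]
  rw [hsum, hsum, hsum, Nat.factorization_mul ha hb,
    Finsupp.sum_add_index' (fun _ => zero_mul _) fun _ _ _ => add_mul _ _ _]

theorem sum_primeFactors_factorization_mul_prime_pow {p n : ℕ} (hp : p.Prime) (g : ℕ → ℕ) :
    ∑ q ∈ (p ^ n).primeFactors, (p ^ n).factorization q * g q = n * g p := by
  rcases eq_or_ne n 0 with rfl | hn
  · simp
  · simp [Nat.primeFactors_prime_pow hn hp, hp.factorization_pow]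

theorem sign_mul_perm_zmod_primeFactors (m : ℕ) [NeZero m] (hm : Odd m) (r : ℤ)
    (hr : IsCoprime r (m : ℤ)) (σ : Equiv.Perm (ZMod m))
    (hσ : ∀ z : ZMod m, σ z = (r : ZMod m) * z) :
    Equiv.Perm.sign σ =
      (-1) ^ (∑ p ∈ m.primeFactors,
        m.factorization p *
          (2 ^ padicValNat 2 (p - 1) / 2 ^ padicValNat 2 (orderOf ((r : ZMod p))))) := by
  revert σ hσ hr hm ‹NeZero m›
  induction m using Nat.recOnPosPrimePosCoprime with
  | prime_pow p n hp hn =>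
    intro _ hm hr σ hσ
    have : Fact p.Prime := ⟨hp⟩
    have hpn : p ∣ p ^ n := dvd_pow_self p hn.ne'
    rw [sum_primeFactors_factorization_mul_prime_pow hp]
    exact sign_mul_perm_zmod_prime_pow (hm.of_dvd_nat hpn)
      (hr.of_isCoprime_of_dvd_right (by exact_mod_cast hpn)) n σ hσ
  | zero => intro _; exact absurd rfl (NeZero.ne 0)
  | one =>
    intro _ _ _ σ _
    rw [Subsingleton.elim σ 1, map_one, Nat.primeFactors_one, Finset.sum_empty, pow_zero]
  | coprime a b ha hb hab iha ihb =>
    intro _ hm hr σ hσ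
    have : NeZero a := ⟨by omega⟩
    have : NeZero b := ⟨by omega⟩
    have hra : IsCoprime r a := hr.of_isCoprime_of_dvd_right (by exact_mod_cast dvd_mul_right a b)
    have hrb : IsCoprime r b := hr.of_isCoprime_of_dvd_right (by exact_mod_cast dvd_mul_left b a)
    obtain ⟨hoa, hob⟩ := Nat.odd_mul.1 hm
    rw [sign_mul_perm_zmod_mul hab hoa hob hσ
      (σa := Units.mulLeft (ZMod.unitOfIsCoprime r hra)) (fun _ => rfl)
      (σb := Units.mulLeft (ZMod.unitOfIsCoprime r hrb)) (fun _ => rfl),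
      iha hoa hra _ fun _ => rfl, ihb hob hrb _ fun _ => rfl, ← pow_add,
      sum_primeFactors_factorization_mul_mul (by omega) (by omega)]
end

section
/- Let d be an odd integer greater than 1 which is not a prime power, and let r be an integer coprime to d. Then the integer φ(d)/ord_d(r) is even, where φ is Euler's totient function and ord_d(r) is the multiplicative order of r modulo d. -/
/-!
Split `d = m * n` with `m, n > 2` coprime (possible as `d` is odd and not a prime power). By the
Chinese remainder theorem the order of `r` modulo `d` divides `lcm (φ m) (φ n)`, and since both
totients are even this lcm divides `φ m * φ n / 2 = φ d / 2`.
-/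

open Nat

theorem Nat.exists_coprime_mul_eq_of_not_isPrimePow {d : ℕ} (hd : 1 < d) (hpp : ¬IsPrimePow d) :
    ∃ m n : ℕ, m.Coprime n ∧ 1 < m ∧ 1 < n ∧ m * n = d := by
  have hp : d.minFac.Prime := minFac_prime hd.ne'
  refine ⟨_, _, Coprime.pow_left _ (coprime_ordCompl hp (by omega)), ?_, ?_,
    ordProj_mul_ordCompl_eq_self d d.minFac⟩
  · exact one_lt_pow (hp.factorization_pos_of_dvd (by omega) (minFac_dvd d)).ne' hp.one_lt
  · have hpos := ordCompl_pos d.minFac (n := d) (by omega)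
    have hne : ordCompl[d.minFac] d ≠ 1 := fun h =>
      hpp ((exists_ordCompl_eq_one_iff_isPrimePow hd.ne').mpr ⟨_, hp, h⟩)
    omega

theorem Nat.two_mul_lcm_dvd_mul_of_even {a b : ℕ} (ha : Even a) (hb : Even b) :
    2 * a.lcm b ∣ a * b := by
  obtain ⟨a, rfl⟩ := ha.two_dvd
  obtain ⟨b, rfl⟩ := hb.two_dvd
  rw [Nat.lcm_mul_left, show 2 * a * (2 * b) = 2 * (2 * (a * b)) by ring]
  exact mul_dvd_mul_left 2 (mul_dvd_mul_left 2 (Nat.lcm_dvd_mul a b))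

namespace ZMod

theorem orderOf_units_dvd_lcm_totient {m n : ℕ} (hmn : m.Coprime n) (u : (ZMod (m * n))ˣ) :
    orderOf u ∣ (φ m).lcm (φ n) := by
  let e : (ZMod (m * n))ˣ ≃* (ZMod m)ˣ × (ZMod n)ˣ :=
    (Units.mapEquiv (chineseRemainder hmn).toMulEquiv).trans MulEquiv.prodUnits
  rw [← MulEquiv.orderOf_eq e, Prod.orderOf]
  exact lcm_dvd_lcm (orderOf_dvd_of_pow_eq_one (pow_totient _))
    (orderOf_dvd_of_pow_eq_one (pow_totient _))

theorem two_mul_orderOf_units_dvd_totient {m n : ℕ} (hmn : m.Coprime n) (hm : 2 < m)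
    (hn : 2 < n) (u : (ZMod (m * n))ˣ) : 2 * orderOf u ∣ φ (m * n) := by
  rw [totient_mul hmn]
  exact (mul_dvd_mul_left 2 (orderOf_units_dvd_lcm_totient hmn u)).trans
    (Nat.two_mul_lcm_dvd_mul_of_even (totient_even hm) (totient_even hn))

end ZMod

theorem even_totient_div_orderOf (d : ℕ) (hd : 1 < d) (hodd : Odd d)
    (hpp : ¬ IsPrimePow d) (r : ℤ) (hr : IsCoprime r (d : ℤ)) :
    Even (d.totient / orderOf ((r : ZMod d))) := by
  obtain ⟨m, n, hmn, hm, hn, rfl⟩ := Nat.exists_coprime_mul_eq_of_not_isPrimePow hd hpp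
  have hm2 : 2 < m := by
    have := Nat.odd_iff.mp (hodd.of_dvd_nat (dvd_mul_right m n))
    omega
  have hn2 : 2 < n := by
    have := Nat.odd_iff.mp (hodd.of_dvd_nat (dvd_mul_left n m))
    omega
  obtain ⟨u, hu⟩ := (ZMod.coe_int_isUnit_iff_isCoprime r (m * n)).mpr hr.symm
  rw [← hu, orderOf_units]
  obtain ⟨c, hc⟩ := ZMod.two_mul_orderOf_units_dvd_totient hmn hm2 hn2 u
  rw [hc, mul_comm 2, mul_assoc, Nat.mul_div_cancel_left _ (orderOf_pos u)]
  exact even_two_mul c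
end

section
/- The alternating group A_10 is 11-semi-rational: for every x ∈ A_10, every generator of the cyclic subgroup generated by x is conjugate in A_10 to x or to x^11. -/
/-!
A generator of `⟨x⟩` has the cycle type of `x`, so it is conjugate to `x` in `S₁₀`. The
`S₁₀`-class of an even `x` is a single `A₁₀`-class unless the centralizer of `x` lies in
`A₁₀`, and then it splits into two; by the criterion on centralizers this happens only for
the cycle types `(9)` and `(7, 3)`. For a `9`-cycle, `x` is `A₁₀`-conjugate to
`x ^ 11 = x ^ 2`, and `2` generates `(ℤ/9)ˣ`, so all generators of `⟨x⟩` are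
`A₁₀`-conjugate to `x`. For type `(7, 3)`, `x` and `x ^ 11` fall into the two different
`A₁₀`-classes, so every generator lies in one of them.
-/

open Equiv Equiv.Perm Subgroup

section Generators

variable {G : Type*} [Group G]

theorem exists_coprime_pow_eq_of_zpowers_eq {x y : G} (hx : IsOfFinOrder x)
    (h : zpowers y = zpowers x) : ∃ k, k.Coprime (orderOf x) ∧ y = x ^ k := by
  obtain ⟨k, rfl⟩ : y ∈ Submonoid.powers x :=
    hx.mem_powers_iff_mem_zpowers.2 (h ▸ mem_zpowers y)
  have hord : orderOf x / (orderOf x).gcd k = orderOf x := by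
    rw [← hx.orderOf_pow, ← Nat.card_zpowers, h, Nat.card_zpowers]
  have hgcd := (Nat.div_eq_self.1 hord).resolve_left hx.orderOf_pos.ne'
  exact ⟨k, Nat.coprime_comm.1 hgcd, rfl⟩

theorem isConj_pow_pow_of_isConj_pow {x : G} {r : ℕ} (h : IsConj x (x ^ r)) (j : ℕ) :
    IsConj x (x ^ r ^ j) := by
  induction j with
  | zero => rw [pow_zero, pow_one]
  | succ j ih => exact ih.trans (by simpa only [← pow_mul, pow_succ'] using h.pow (r ^ j))

theorem isConj_of_zpowers_eq_of_isConj_pow {x y : G} (hx : IsOfFinOrder x) {r : ℕ}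
    (hr : IsConj x (x ^ r))
    (hgen : ∀ k, k.Coprime (orderOf x) → ∃ j, r ^ j ≡ k [MOD orderOf x])
    (h : zpowers y = zpowers x) : IsConj y x := by
  obtain ⟨k, hk, rfl⟩ := exists_coprime_pow_eq_of_zpowers_eq hx h
  obtain ⟨j, hj⟩ := hgen k hk
  rw [← pow_eq_pow_iff_modEq.2 hj]
  exact (isConj_pow_pow_of_isConj_pow hr j).symm

end Generators

theorem Nat.exists_eleven_pow_modEq_nine {k : ℕ} (hk : k.Coprime 9) :
    ∃ j, 11 ^ j ≡ k [MOD 9] := by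
  have key : ∀ k < 9, k.Coprime 9 → ∃ j < 6, 11 ^ j % 9 = k := by decide
  obtain ⟨j, -, hj⟩ :=
    key (k % 9) (k.mod_lt (by norm_num)) ((ZMod.coprime_mod_iff_coprime k 9).2 hk)
  exact ⟨j, hj⟩

namespace Equiv.Perm

variable {α : Type*} [Fintype α] [DecidableEq α]

theorem cycleType_pow_of_coprime (σ : Perm α) {k : ℕ} (hk : k.Coprime (orderOf σ)) :
    (σ ^ k).cycleType = σ.cycleType := by
  induction σ using cycle_induction_on with
  | base_one => simp
  | base_cycles c hc => rw [(hc.pow_iff.2 hk).cycleType, hc.cycleType, support_pow_coprime hk]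
  | induction_disjoint σ τ hd _ ihσ ihτ =>
    rw [hd.orderOf] at hk
    rw [hd.commute.mul_pow, (hd.pow_disjoint_pow k k).cycleType_mul, hd.cycleType_mul,
      ihσ (hk.coprime_dvd_right (Nat.dvd_lcm_left _ _)),
      ihτ (hk.coprime_dvd_right (Nat.dvd_lcm_right _ _))]

theorem cycleType_eq_of_zpowers_eq {σ τ : Perm α} (h : zpowers τ = zpowers σ) :
    τ.cycleType = σ.cycleType := by
  obtain ⟨k, hk, rfl⟩ := exists_coprime_pow_eq_of_zpowers_eq (isOfFinOrder_of_finite σ) h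
  exact cycleType_pow_of_coprime σ hk

end Equiv.Perm

namespace Subgroup

variable {G : Type*} [Group G] {H : Subgroup G}

theorem isConj_of_not_centralizer_le (hH : H.index = 2) {x y : H} (hxy : IsConj (x : G) y)
    (hC : ¬ centralizer {(x : G)} ≤ H) : IsConj x y := by
  obtain ⟨g, hg⟩ := isConj_iff.1 hxy
  obtain ⟨c, hc, hcH⟩ := SetLike.not_le_iff_exists.1 hC
  have hcx : c * x * c⁻¹ = x := by
    rw [mem_centralizer_singleton_iff.1 hc, mul_inv_cancel_right]
  by_cases hgH : g ∈ H
  · exact isConj_iff.2 ⟨⟨g, hgH⟩, Subtype.ext hg⟩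
  · have hgc : g * c ∈ H := (mul_mem_iff_of_index_two hH).2 (iff_of_false hgH hcH)
    refine isConj_iff.2 ⟨⟨g * c, hgc⟩, Subtype.ext ?_⟩
    calc g * c * x * (g * c)⁻¹ = g * (c * x * c⁻¹) * g⁻¹ := by group
      _ = y := by rw [hcx, hg]

theorem not_isConj_of_centralizer_le_s15 {x y : H} (hC : centralizer {(x : G)} ≤ H) {g : G}
    (hgH : g ∉ H) (hg : g * x * g⁻¹ = y) : ¬ IsConj x y := by
  intro hxy
  obtain ⟨⟨h, hh⟩, hhx⟩ := isConj_iff.1 hxy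
  have hhx : h * x * h⁻¹ = y := congrArg Subtype.val hhx
  have hcomm : h⁻¹ * g ∈ centralizer {(x : G)} := by
    rw [mem_centralizer_singleton_iff]
    calc h⁻¹ * g * x = h⁻¹ * (g * x * g⁻¹) * g := by group
      _ = h⁻¹ * (h * x * h⁻¹) * g := by rw [hg, hhx]
      _ = x * (h⁻¹ * g) := by group
  exact hgH (by simpa using H.mul_mem hh (hC hcomm))

theorem isConj_or_isConj_of_not_isConj (hH : H.index = 2) {x y z : H}
    (hyx : IsConj (y : G) x) (hyz : IsConj (y : G) z) (hxz : ¬ IsConj x z) :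
    IsConj y x ∨ IsConj y z := by
  obtain ⟨g, hg⟩ := isConj_iff.1 hyx
  obtain ⟨h, hh⟩ := isConj_iff.1 hyz
  by_cases hgH : g ∈ H
  · exact Or.inl (isConj_iff.2 ⟨⟨g, hgH⟩, Subtype.ext hg⟩)
  by_cases hhH : h ∈ H
  · exact Or.inr (isConj_iff.2 ⟨⟨h, hhH⟩, Subtype.ext hh⟩)
  have hhg : h * g⁻¹ ∈ H :=
    (mul_mem_iff_of_index_two hH).2 (iff_of_false hhH (by simpa using hgH))
  refine absurd (isConj_iff.2 ⟨⟨h * g⁻¹, hhg⟩, Subtype.ext ?_⟩) hxz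
  calc h * g⁻¹ * x * (h * g⁻¹)⁻¹ = h * (g⁻¹ * (g * y * g⁻¹) * g) * h⁻¹ := by
        rw [hg]; group
    _ = z := by rw [← hh]; group

theorem isConj_pow_of_isConj_coe [H.Normal] {x y : H} (hxy : IsConj (x : G) y) {n : ℕ}
    (h : IsConj x (x ^ n)) : IsConj y (y ^ n) := by
  obtain ⟨g, hg⟩ := isConj_iff.1 hxy
  have hgx : MulAut.conjNormal g x = y := Subtype.ext (by rw [MulAut.conjNormal_apply, hg])
  have := (MulAut.conjNormal g).toMonoidHom.map_isConj h
  rwa [map_pow, MulEquiv.coe_toMonoidHom, hgx] at this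

end Subgroup

section FinTen

theorem cycleType_fin_ten_of_centralizer_le_alternatingGroup {σ : Perm (Fin 10)}
    (h : centralizer {σ} ≤ alternatingGroup (Fin 10)) :
    σ.cycleType = {9} ∨ σ.cycleType = {7, 3} := by
  obtain ⟨hodd, hcard, hcount⟩ := centralizer_le_alternating_iff.1 h
  have hsum : σ.cycleType.sum ≤ 10 := sum_cycleType σ ▸ σ.support.card_le_univ
  have hsub : σ.cycleType ≤ {3, 5, 7, 9} := by
    refine (Multiset.le_iff_subset (Multiset.nodup_iff_count_le_one.2 hcount)).2 fun a ha => ?_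
    have := (Multiset.le_sum_of_mem ha).trans hsum
    have := two_le_of_mem_cycleType ha
    obtain ⟨b, rfl⟩ := hodd a ha
    simp only [Multiset.insert_eq_cons, Multiset.mem_cons, Multiset.mem_singleton]
    omega
  have key : ∀ m ∈ Multiset.powerset ({3, 5, 7, 9} : Multiset ℕ),
      9 ≤ m.sum → m.sum ≤ 10 → m = {9} ∨ m = {7, 3} := by decide
  exact key _ (Multiset.mem_powerset.2 hsub) (by simpa using hcard) hsum

set_option maxRecDepth 10000 in
theorem isConj_pow_eleven_of_cycleType_eq_nine {x : alternatingGroup (Fin 10)}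
    (hx : (x : Perm (Fin 10)).cycleType = {9}) : IsConj x (x ^ 11) := by
  let c : alternatingGroup (Fin 10) :=
    ⟨List.formPerm [0, 1, 2, 3, 4, 5, 6, 7, 8], mem_alternatingGroup.2 (by decide)⟩
  have hcx : IsConj (c : Perm (Fin 10)) x := isConj_iff_cycleType_eq.2 (by rw [hx]; decide)
  -- `i ↦ 2 * i` on `ℤ/9`, which conjugates `c` to `c ^ 2 = c ^ 11`
  let w : alternatingGroup (Fin 10) :=
    ⟨List.formPerm [1, 2, 4, 8, 7, 5] * List.formPerm [3, 6],
      mem_alternatingGroup.2 (by decide)⟩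
  exact isConj_pow_of_isConj_coe hcx (isConj_iff.2 ⟨w, Subtype.ext (by decide)⟩)

set_option maxRecDepth 10000 in
theorem not_isConj_pow_eleven_of_cycleType_eq_seven_three {x : alternatingGroup (Fin 10)}
    (hx : (x : Perm (Fin 10)).cycleType = {7, 3}) : ¬ IsConj x (x ^ 11) := by
  let c : alternatingGroup (Fin 10) :=
    ⟨List.formPerm [0, 1, 2, 3, 4, 5, 6] * List.formPerm [7, 8, 9],
      mem_alternatingGroup.2 (by decide)⟩
  have hc : (c : Perm (Fin 10)).cycleType = {7, 3} := by decide
  have hxc : IsConj (x : Perm (Fin 10)) c := isConj_iff_cycleType_eq.2 (by rw [hx, hc])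
  have hC : centralizer {(c : Perm (Fin 10))} ≤ alternatingGroup (Fin 10) :=
    centralizer_le_alternating_iff.2 (by
      rw [hc]; exact ⟨by decide, by simp, Multiset.nodup_iff_count_le_one.1 (by decide)⟩)
  -- `i ↦ 4 * i` on `ℤ/7` and `i ↦ 2 * i` on `ℤ/3`: two `3`-cycles and a transposition
  let w : Perm (Fin 10) :=
    List.formPerm [1, 4, 2] * List.formPerm [3, 5, 6] * List.formPerm [8, 9]
  exact fun h => not_isConj_of_centralizer_le_s15 hC (g := w) (by rw [mem_alternatingGroup]; decide)
    (by decide) (isConj_pow_of_isConj_coe hxc h)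

end FinTen

theorem alternatingGroup_ten_semiRational :
    IsSemiRational (alternatingGroup (Fin 10)) 11 := by
  intro x y hyx
  have hzpowers : zpowers (y : Perm (Fin 10)) = zpowers (x : Perm (Fin 10)) := by
    simpa only [MonoidHom.map_zpowers, coe_subtype] using
      congrArg (map (alternatingGroup (Fin 10)).subtype) hyx
  have hyx' : IsConj (y : Perm (Fin 10)) x :=
    isConj_iff_cycleType_eq.2 (cycleType_eq_of_zpowers_eq hzpowers)
  rw [zpow_ofNat]
  by_cases hC : centralizer {(x : Perm (Fin 10))} ≤ alternatingGroup (Fin 10)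
  · rcases cycleType_fin_ten_of_centralizer_le_alternatingGroup hC with h9 | h73
    · have hord : orderOf x = 9 := by rw [← orderOf_coe, ← lcm_cycleType, h9]; rfl
      exact Or.inl (isConj_of_zpowers_eq_of_isConj_pow (isOfFinOrder_of_finite x)
        (isConj_pow_eleven_of_cycleType_eq_nine h9)
        (hord ▸ fun _ => Nat.exists_eleven_pow_modEq_nine) hyx)
    · have hord : orderOf (x : Perm (Fin 10)) = 21 := by rw [← lcm_cycleType, h73]; rfl
      have h11 : IsConj (y : Perm (Fin 10)) ↑(x ^ 11) := by
        refine hyx'.trans (isConj_iff_cycleType_eq.2 ?_)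
        rw [Subgroup.coe_pow, cycleType_pow_of_coprime _ (by rw [hord]; decide)]
      exact isConj_or_isConj_of_not_isConj alternatingGroup.index_eq_two hyx' h11
        (not_isConj_pow_eleven_of_cycleType_eq_seven_three h73)
  · exact Or.inl (isConj_of_not_centralizer_le alternatingGroup.index_eq_two hyx'.symm hC).symm
end
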